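/- arXiv:2207.11653 — 10 statements merged into one kernel-verified Lean document; each statement's English description precedes it below -/
import Mathlib

section
/- Let F be a closed subset of ℝ, let 𝔫 be an infinite supernatural number, and let D be the corresponding subring of ℚ (rationals p/q with q dividing 𝔫). Equip the group G of Laurent polynomials in e^x with coefficients in D with the positive cone consisting of 0 together with functions strictly positive at every point of F. If F is either bounded above or bounded below, then (G, G⁺) has the Riesz interpolation property. -/
/-- A supernatural number, given by the exponent of each prime. -/
def Supernatural : Type := ℕ → ℕ∞

/-- A natural number `q` divides the supernatural number `s`. -/
def Supernatural.natDvd (q : ℕ) (s : Supernatural) : Prop :=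
  ∀ p : ℕ, p.Prime → (q.factorization p : ℕ∞) ≤ s p

/-- A supernatural number is infinite if it has arbitrarily large natural divisors. -/
def Supernatural.Infinite (s : Supernatural) : Prop :=
  ∀ N : ℕ, ∃ q : ℕ, 0 < q ∧ Supernatural.natDvd q s ∧ N < q

/-- Membership of a rational in `D_𝔫`: the denominator (in lowest terms) divides `𝔫`. -/
def Supernatural.memD (s : Supernatural) (x : ℚ) : Prop :=
  Supernatural.natDvd x.den s

/-- `f : ℝ → ℝ` is a Laurent polynomial in `e^x` with coefficients in `D_𝔫`. -/
def IsLaurentExp (s : Supernatural) (f : ℝ → ℝ) : Prop :=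
  ∃ c : ℤ →₀ ℚ, (∀ n : ℤ, s.memD (c n)) ∧
    ∀ x : ℝ, f x = c.sum fun n a => (a : ℝ) * Real.exp (n * x)

/-- The order relation on `D_𝔫[e^x, e^{-x}]` given by the strict pointwise cone on `F`:
`f ≤ g` iff `g - f` is `0` or strictly positive at every point of `F`. -/
def LaurentLe (F : Set ℝ) (f g : ℝ → ℝ) : Prop :=
  g = f ∨ ∀ x ∈ F, f x < g x

section RieszAux
open Real Filter

noncomputable def ev (c : ℤ →₀ ℚ) (t : ℝ) : ℝ := c.sum fun n a => (a : ℝ) * t ^ n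

lemma exp_int (n : ℤ) (x : ℝ) : Real.exp ((n:ℝ) * x) = Real.exp x ^ n := by
  rw [mul_comm, Real.exp_mul, Real.rpow_intCast]

lemma ev_exp (c : ℤ →₀ ℚ) (x : ℝ) :
    (c.sum fun n a => (a : ℝ) * Real.exp ((n:ℝ) * x)) = ev c (Real.exp x) := by
  unfold ev; refine Finsupp.sum_congr fun n _ => ?_; rw [exp_int]

lemma ev_sub (c d : ℤ →₀ ℚ) (t : ℝ) : ev (c - d) t = ev c t - ev d t := by
  unfold ev
  rw [Finsupp.sum_sub_index]
  intro n a b; push_cast; ring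

lemma ev_zero (t : ℝ) : ev 0 t = 0 := Finsupp.sum_zero_index

lemma ev_continuousOn (c : ℤ →₀ ℚ) : ContinuousOn (ev c) {t : ℝ | t ≠ 0} := by
  unfold ev
  refine continuousOn_finset_sum _ fun n _ => ?_
  exact (continuousOn_const.mul (fun t ht => ((continuousAt_zpow₀ t n (Or.inl ht)).continuousWithinAt)))

lemma tendsto_ev_div (c : ℤ →₀ ℚ) (hc : c ≠ 0) :
    Tendsto (fun t => ev c t / t ^ (c.support.min' (Finsupp.support_nonempty_iff.2 hc)))
      (nhdsWithin 0 (Set.Ioi 0)) (nhds (c (c.support.min' (Finsupp.support_nonempty_iff.2 hc)))) := by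
  set k := c.support.min' (Finsupp.support_nonempty_iff.2 hc) with hk
  have h1 : Tendsto (fun t : ℝ => ∑ n ∈ c.support, (c n : ℝ) * t ^ (n - k))
      (nhdsWithin 0 (Set.Ioi 0)) (nhds (∑ n ∈ c.support, if n = k then (c k : ℝ) else 0)) := by
    refine tendsto_finset_sum _ fun n hn => ?_
    by_cases h : n = k
    · subst h; simp only [sub_self, zpow_zero, mul_one, if_true]
      exact tendsto_const_nhds
    · simp only [h, if_false]
      have hpos : 0 < n - k := by
        have := Finset.min'_le _ _ hn
        omega
      have : Tendsto (fun t : ℝ => t ^ (n - k)) (nhdsWithin 0 (Set.Ioi 0)) (nhds 0) := by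
        have hcont : ContinuousAt (fun t : ℝ => t ^ (n - k)) 0 :=
          continuousAt_zpow₀ 0 (n - k) (Or.inr hpos.le)
        have h0 : (0:ℝ) ^ (n - k) = 0 := zero_zpow _ (by omega)
        simpa [h0] using hcont.continuousWithinAt.tendsto
      simpa using Tendsto.mul (tendsto_const_nhds (x := (c n : ℝ))) this
  have h2 : (∑ n ∈ c.support, if n = k then (c k : ℝ) else 0) = c k := by
    rw [Finset.sum_eq_single_of_mem k (c.support.min'_mem _)]
    · simp
    · intro n _ hn; simp [hn]
  rw [h2] at h1
  refine h1.congr' ?_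
  filter_upwards [self_mem_nhdsWithin] with t ht
  have ht' : (t:ℝ) ≠ 0 := ne_of_gt ht
  unfold ev
  rw [Finsupp.sum, Finset.sum_div]
  refine Finset.sum_congr rfl fun n hn => ?_
  rw [mul_comm ((c n : ℝ)) _, mul_div_assoc, ← zpow_sub₀ ht', mul_comm]

lemma ev_div_atTop (c : ℤ →₀ ℚ) (hc : c ≠ 0) (N : ℤ)
    (hpos : 0 < c (c.support.min' (Finsupp.support_nonempty_iff.2 hc)))
    (hN : c.support.min' (Finsupp.support_nonempty_iff.2 hc) < N) :
    Tendsto (fun t => ev c t / t ^ N) (nhdsWithin 0 (Set.Ioi 0)) atTop := by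
  set k := c.support.min' (Finsupp.support_nonempty_iff.2 hc) with hk
  have h2 : Tendsto (fun t : ℝ => t ^ (N - k)) (nhdsWithin 0 (Set.Ioi 0))
      (nhdsWithin 0 (Set.Ioi 0)) := by
    have hcont : ContinuousAt (fun t : ℝ => t ^ (N - k)) 0 :=
      continuousAt_zpow₀ 0 (N - k) (Or.inr (by omega))
    have h0 : (0:ℝ) ^ (N - k) = 0 := zero_zpow _ (by omega)
    refine tendsto_nhdsWithin_of_tendsto_nhds_of_eventually_within _ ?_ ?_
    · simpa [h0] using hcont.continuousWithinAt.tendsto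
    · filter_upwards [self_mem_nhdsWithin] with t ht
      exact zpow_pos (Set.mem_Ioi.1 ht) _
  have h3 : Tendsto (fun t : ℝ => (t ^ (N - k))⁻¹) (nhdsWithin 0 (Set.Ioi 0)) atTop :=
    h2.inv_tendsto_nhdsGT_zero
  have hC : (0:ℝ) < (c k : ℝ) := by exact_mod_cast hpos
  have h4 := Filter.Tendsto.pos_mul_atTop hC (tendsto_ev_div c hc) h3
  refine h4.congr' ?_
  filter_upwards [self_mem_nhdsWithin] with t ht
  have ht' : (t:ℝ) ≠ 0 := ne_of_gt ht
  field_simp [zpow_sub₀ ht']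
  rw [← hk, mul_assoc, ← zpow_add₀ ht', add_sub_cancel]

lemma ev_neg_eventually (c : ℤ →₀ ℚ) (hc : c ≠ 0)
    (hneg : c (c.support.min' (Finsupp.support_nonempty_iff.2 hc)) < 0) :
    ∀ᶠ t in nhdsWithin 0 (Set.Ioi 0), ev c t < 0 := by
  set k := c.support.min' (Finsupp.support_nonempty_iff.2 hc) with hk
  have hC : ((c k : ℝ)) < 0 := by exact_mod_cast hneg
  have h1 : ∀ᶠ t in nhdsWithin (0:ℝ) (Set.Ioi 0), ev c t / t ^ k < 0 := (tendsto_ev_div c hc).eventually (eventually_lt_nhds hC)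

  filter_upwards [h1, self_mem_nhdsWithin] with t h2 ht
  have hp : (0:ℝ) < t ^ k := zpow_pos ht k
  have : ev c t = (ev c t / t ^ k) * t ^ k := (div_mul_cancel₀ _ (ne_of_gt hp)).symm
  rw [this]
  exact mul_neg_of_neg_of_pos h2 hp

lemma natDvd_of_dvd {d q : ℕ} {s : Supernatural} (hd : d ∣ q) (hq : 0 < q)
    (h : Supernatural.natDvd q s) : Supernatural.natDvd d s := by
  intro p hp
  refine le_trans ?_ (h p hp)
  have hd0 : d ≠ 0 := by rintro rfl; simp [Nat.zero_dvd] at hd; omega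
  have := (Nat.factorization_le_iff_dvd hd0 (by omega)).2 hd
  exact_mod_cast Nat.cast_le.2 (this p)

lemma memD_zero (s : Supernatural) : s.memD 0 := by
  intro p hp; simp

lemma memD_neg {s : Supernatural} {x : ℚ} (h : s.memD x) : s.memD (-x) := by
  simpa [Supernatural.memD, Rat.neg_den] using h

lemma memD_int_div {s : Supernatural} (z : ℤ) (q : ℕ) (hq : 0 < q)
    (h : Supernatural.natDvd q s) : s.memD ((z : ℚ) / (q : ℚ)) := by
  have hden : (((z : ℚ) / (q : ℚ)).den : ℤ) ∣ (q : ℤ) := by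
    have := Rat.den_dvd z (q : ℤ)
    rwa [Rat.divInt_eq_div] at this
  exact natDvd_of_dvd (Int.ofNat_dvd.1 (by simpa using hden)) hq h

lemma ev_single (n : ℤ) (a : ℚ) (t : ℝ) : ev (Finsupp.single n a) t = (a:ℝ) * t ^ n := by
  unfold ev; rw [Finsupp.sum_single_index]; simp

lemma ev_add (c d : ℤ →₀ ℚ) (t : ℝ) : ev (c + d) t = ev c t + ev d t := by
  unfold ev
  rw [Finsupp.sum_add_index (by intros; simp) (by intros; push_cast; ring)]

lemma ev_finset_sum {ι : Type*} (s : Finset ι) (f : ι → (ℤ →₀ ℚ)) (t : ℝ) :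
    ev (∑ i ∈ s, f i) t = ∑ i ∈ s, ev (f i) t :=
  map_sum (AddMonoidHom.mk' (fun c => ev c t) (fun c d => ev_add c d t)) f s

lemma aux_main (F : Set ℝ) (hF : IsClosed F) (𝔫 : Supernatural) (h𝔫 : 𝔫.Infinite)
    (M : ℝ) (hM : ∀ x ∈ F, x ≤ M)
    (cstar cother cg₀ cg₁ : ℤ →₀ ℚ)
    (hstar : ∀ n, 𝔫.memD (cstar n))
    (hcond : cstar - cother = 0 ∨ ∃ h : cstar - cother ≠ 0,
      (cstar - cother) ((cstar - cother).support.min' (Finsupp.support_nonempty_iff.2 h)) < 0)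
    (hs0 : ∀ x ∈ F, ev cg₀ (Real.exp x) < ev cstar (Real.exp x))
    (hs1 : ∀ x ∈ F, ev cg₁ (Real.exp x) < ev cstar (Real.exp x))
    (ho0 : ∀ x ∈ F, ev cg₀ (Real.exp x) < ev cother (Real.exp x))
    (ho1 : ∀ x ∈ F, ev cg₁ (Real.exp x) < ev cother (Real.exp x)) :
    ∃ ca : ℤ →₀ ℚ, (∀ n, 𝔫.memD (ca n)) ∧ ∀ x ∈ F,
      ev cg₀ (Real.exp x) < ev ca (Real.exp x) ∧
      ev cg₁ (Real.exp x) < ev ca (Real.exp x) ∧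
      ev ca (Real.exp x) < ev cstar (Real.exp x) ∧
      ev ca (Real.exp x) < ev cother (Real.exp x) := by
  classical
  set l : ℤ →₀ ℚ := cstar - cother with hl
  set u₀ : ℤ →₀ ℚ := cstar - cg₀ with hu₀
  set u₁ : ℤ →₀ ℚ := cstar - cg₁ with hu₁
  set S : Finset ℤ := ((u₀.support ∪ u₁.support) ∪ l.support) ∪ cstar.support with hS
  set N : ℤ := ((S.sup fun n => n.toNat : ℕ) : ℤ) + 1 with hN
  have hN1 : 1 ≤ N := by simp [hN]
  have hNS : ∀ n ∈ S, n < N := by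
    intro n hn
    have h1 : n ≤ (n.toNat : ℤ) := Int.self_le_toNat n
    have h2 : n.toNat ≤ S.sup (fun n => n.toNat) := Finset.le_sup hn
    omega
  set b : ℝ := Real.exp M with hb
  have hbpos : 0 < b := Real.exp_pos M
  -- tail estimates
  have tail : ∃ x₀ : ℝ, ∀ x ∈ F, x < x₀ →
      ev l (Real.exp x) ≤ 0 ∧ 3 ≤ ev u₀ (Real.exp x) / (Real.exp x) ^ N ∧
        3 ≤ ev u₁ (Real.exp x) / (Real.exp x) ^ N := by
    by_cases hbb : BddBelow F
    · obtain ⟨β, hβ⟩ := hbb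
      exact ⟨β, fun x hx hlt => absurd (hβ hx) (by simp; linarith)⟩
    · have hget : ∀ y : ℝ, ∃ x ∈ F, x < y := fun y => by
        obtain ⟨x, hx, hxy⟩ := (not_bddBelow_iff.1 hbb) y; exact ⟨x, hx, hxy⟩
      have key : ∀ c : ℤ →₀ ℚ, c.support ⊆ S → (∀ x ∈ F, 0 < ev c (Real.exp x)) →
          ∀ᶠ t in nhdsWithin (0:ℝ) (Set.Ioi 0), 3 ≤ ev c t / t ^ N := by
        intro c hsub hpos
        have hc : c ≠ 0 := by
          rintro rfl
          obtain ⟨x, hx, -⟩ := hget 0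
          simpa [ev_zero] using hpos x hx
        have hkS : c.support.min' (Finsupp.support_nonempty_iff.2 hc) < N :=
          hNS _ (hsub (c.support.min'_mem _))
        have hlead : 0 < c (c.support.min' (Finsupp.support_nonempty_iff.2 hc)) := by
          rcases lt_trichotomy (c (c.support.min' (Finsupp.support_nonempty_iff.2 hc))) 0 with h|h|h
          · exfalso
            have hev := ev_neg_eventually c hc h
            rw [eventually_iff, mem_nhdsWithin] at hev
            obtain ⟨U, hUo, hU0, hUsub⟩ := hev
            obtain ⟨ε, hε, hball⟩ := Metric.isOpen_iff.1 hUo 0 hU0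
            obtain ⟨x, hxF, hxlt⟩ := hget (Real.log ε)
            have ht : Real.exp x ∈ U ∩ Set.Ioi 0 := by
              constructor
              · apply hball
                simp only [Metric.mem_ball, Real.dist_eq, sub_zero]
                rw [abs_of_pos (Real.exp_pos x)]
                exact (Real.lt_log_iff_exp_lt hε).1 hxlt
              · exact Real.exp_pos x
            exact absurd (hpos x hxF) (not_lt.2 (hUsub ht).le)
          · exact absurd h (Finsupp.mem_support_iff.1 (c.support.min'_mem _))
          · exact h
        exact (ev_div_atTop c hc N hlead hkS).eventually_ge_atTop 3
      have h0' := key u₀ (by intro n hn; exact Finset.mem_union_left _ (Finset.mem_union_left _ (Finset.mem_union_left _ hn)))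
        (fun x hx => by rw [hu₀, ev_sub]; linarith [hs0 x hx])
      have h1' := key u₁ (by intro n hn; exact Finset.mem_union_left _ (Finset.mem_union_left _ (Finset.mem_union_right _ hn)))
        (fun x hx => by rw [hu₁, ev_sub]; linarith [hs1 x hx])
      have hl' : ∀ᶠ t in nhdsWithin (0:ℝ) (Set.Ioi 0), ev l t ≤ 0 := by
        rcases hcond with h | ⟨h, hneg⟩
        · exact Eventually.of_forall (fun t => by rw [h, ev_zero])
        · exact (ev_neg_eventually _ h hneg).mono (fun t ht => ht.le)
      have hE := hl'.and (h0'.and h1')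
      rw [eventually_iff, mem_nhdsWithin] at hE
      obtain ⟨U, hUo, hU0, hUsub⟩ := hE
      obtain ⟨ε, hε, hball⟩ := Metric.isOpen_iff.1 hUo 0 hU0
      refine ⟨Real.log ε, fun x hxF hxlt => ?_⟩
      have ht : Real.exp x ∈ U ∩ Set.Ioi 0 := by
        constructor
        · apply hball
          simp only [Metric.mem_ball, Real.dist_eq, sub_zero]
          rw [abs_of_pos (Real.exp_pos x)]
          exact (Real.lt_log_iff_exp_lt hε).1 hxlt
        · exact Real.exp_pos x
      exact hUsub ht
  obtain ⟨x₀, hx₀⟩ := tail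
  set Ahat : ℝ → ℝ := fun t => max 0 (ev l t / t ^ N) with hA
  set Bhat : ℝ → ℝ := fun t => min (ev u₀ t / t ^ N) (ev u₁ t / t ^ N) with hB
  set Ec : Set ℝ := Real.exp '' (F ∩ Set.Icc x₀ M) with hEc
  have hzpow : ∀ t : ℝ, 0 < t → (0:ℝ) < t ^ N := fun t ht => zpow_pos ht N
  have hcont : ∀ c : ℤ →₀ ℚ, ContinuousOn (fun t => ev c t / t ^ N) {t : ℝ | t ≠ 0} := by
    intro c
    apply (ev_continuousOn c).div
    · intro t ht
      exact (continuousAt_zpow₀ t N (Or.inl ht)).continuousWithinAt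
    · intro t ht
      exact zpow_ne_zero N ht
  have hgapcont : ContinuousOn (fun t => Bhat t - Ahat t) {t : ℝ | t ≠ 0} := by
    apply ContinuousOn.sub
    · exact ((hcont u₀).inf (hcont u₁))
    · exact ContinuousOn.sup continuousOn_const (hcont l)
  have hEcsub : Ec ⊆ {t : ℝ | t ≠ 0} := by
    rintro t ⟨x, -, rfl⟩; exact ne_of_gt (Real.exp_pos x)
  have hEccomp : IsCompact Ec :=
    ((isCompact_Icc).inter_left hF).image Real.continuous_exp
  have hgap : ∀ t ∈ Ec, 0 < Bhat t - Ahat t := by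
    rintro t ⟨x, ⟨hxF, -⟩, rfl⟩
    set t := Real.exp x
    have ht : (0:ℝ) < t := Real.exp_pos x
    have htN := hzpow t ht
    have h1 : ev l t < ev u₀ t := by
      rw [hl, hu₀, ev_sub, ev_sub]; linarith [ho0 x hxF]
    have h2 : ev l t < ev u₁ t := by
      rw [hl, hu₁, ev_sub, ev_sub]; linarith [ho1 x hxF]
    have h3 : 0 < ev u₀ t := by rw [hu₀, ev_sub]; linarith [hs0 x hxF]
    have h4 : 0 < ev u₁ t := by rw [hu₁, ev_sub]; linarith [hs1 x hxF]
    have hmax : Ahat t < Bhat t := by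
      rw [hA, hB]
      apply max_lt <;> apply lt_min
      · exact div_pos h3 htN
      · exact div_pos h4 htN
      · exact div_lt_div_of_pos_right h1 htN
      · exact div_lt_div_of_pos_right h2 htN
    linarith
  obtain ⟨γ, hγpos, hγ⟩ : ∃ γ : ℝ, 0 < γ ∧ ∀ t ∈ Ec, γ ≤ Bhat t - Ahat t := by
    rcases Ec.eq_empty_or_nonempty with he | hne
    · exact ⟨1, one_pos, by simp [he]⟩
    · obtain ⟨t₀, ht₀, hmin⟩ := hEccomp.exists_isMinOn hne (hgapcont.mono hEcsub)
      exact ⟨_, hgap t₀ ht₀, fun t ht => hmin ht⟩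
  set δ : ℝ := min (1/2 : ℝ) (γ/2) with hδ
  have hδpos : 0 < δ := lt_min (by norm_num) (by linarith)
  have hδh : δ ≤ 1/2 := min_le_left _ _
  have hδγ : 2 * δ ≤ γ := by
    have := min_le_right (1/2 : ℝ) (γ/2); linarith
  have channel : ∀ x ∈ F, Ahat (Real.exp x) + 2*δ ≤ Bhat (Real.exp x) := by
    intro x hxF
    have ht : (0:ℝ) < Real.exp x := Real.exp_pos x
    by_cases hx : x < x₀
    · obtain ⟨hle, h30, h31⟩ := hx₀ x hxF hx
      have hA0 : Ahat (Real.exp x) = 0 := by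
        rw [hA]
        exact max_eq_left (div_nonpos_of_nonpos_of_nonneg hle (hzpow _ ht).le)
      have hB3 : 3 ≤ Bhat (Real.exp x) := le_min h30 h31
      rw [hA0]; linarith
    · have htEc : Real.exp x ∈ Ec := ⟨x, ⟨hxF, ⟨not_lt.1 hx, hM x hxF⟩⟩, rfl⟩
      have := hγ _ htEc
      linarith
  -- φ and its continuity
  set φ : ℝ → ℝ := fun t => Ahat t + δ with hφdef
  have hφne : ContinuousOn φ {t : ℝ | t ≠ 0} :=
    (ContinuousOn.sup continuousOn_const (hcont l)).add continuousOn_const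
  have hlsmall : ∃ ε > (0:ℝ), ∀ s : ℝ, 0 < s → s < ε → ev l s ≤ 0 := by
    have hl' : ∀ᶠ s in nhdsWithin (0:ℝ) (Set.Ioi 0), ev l s ≤ 0 := by
      rcases hcond with h | ⟨h, hneg⟩
      · exact Eventually.of_forall (fun s => by rw [show l = 0 from h, ev_zero])
      · exact (ev_neg_eventually _ h hneg).mono (fun s hs => hs.le)
    rw [eventually_iff, mem_nhdsWithin] at hl'
    obtain ⟨U, hUo, hU0, hUsub⟩ := hl'
    obtain ⟨ε, hε, hball⟩ := Metric.isOpen_iff.1 hUo 0 hU0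
    refine ⟨ε, hε, fun s hs0 hsε => hUsub ⟨hball ?_, hs0⟩⟩
    simp only [Metric.mem_ball, Real.dist_eq, sub_zero]
    rwa [abs_of_pos hs0]
  have hφcont : ContinuousOn φ (Set.Icc 0 b) := by
    intro t htIcc
    by_cases ht0 : t = 0
    · subst ht0
      obtain ⟨ε, hε, hεP⟩ := hlsmall
      have hval : φ 0 = δ := by
        rw [hφdef]
        simp only [hA]
        rw [zero_zpow N (by omega), div_zero]
        simp
      have hEv : φ =ᶠ[nhdsWithin 0 (Set.Icc 0 b)] fun _ => δ := by
        rw [EventuallyEq, eventually_nhdsWithin_iff]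
        rw [Metric.eventually_nhds_iff]
        refine ⟨ε, hε, fun s hsd hsI => ?_⟩
        rcases eq_or_lt_of_le hsI.1 with h0 | h0
        · rw [← h0]; exact hval
        · have hsε : s < ε := by
            rw [Real.dist_eq, sub_zero] at hsd
            calc s ≤ |s| := le_abs_self s
            _ < ε := hsd
          have : ev l s ≤ 0 := hεP s h0 hsε
          rw [hφdef]
          simp only [hA]
          rw [max_eq_left (div_nonpos_of_nonpos_of_nonneg this (zpow_pos h0 N).le)]
          simp
      exact (continuousWithinAt_const (b := δ)).congr_of_eventuallyEq hEv hval
    · exact (hφne.continuousAt (isOpen_ne.mem_nhds ht0)).continuousWithinAt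
  -- Weierstrass approximation
  obtain ⟨P, hP⟩ := exists_polynomial_near_of_continuousOn 0 b φ hφcont (δ/2) (by positivity)
  set dP := P.natDegree with hdP
  set b' : ℝ := max 1 b with hb'
  have hb'1 : (1:ℝ) ≤ b' := le_max_left _ _
  set Bnd : ℝ := (dP+1 : ℝ) * b' ^ dP with hBnd
  have hBndpos : 0 < Bnd := by positivity
  obtain ⟨q, hq0, hqD, hqgt⟩ := h𝔫 ⌈2 * Bnd / δ⌉₊
  have hqpos : (0:ℝ) < (q:ℝ) := by exact_mod_cast hq0
  have hqR : 2 * Bnd / δ < (q:ℝ) :=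
    lt_of_le_of_lt (Nat.le_ceil _) (by exact_mod_cast hqgt)
  have hErr : Bnd / (q:ℝ) < δ/2 := by
    rw [div_lt_iff₀ hqpos]
    rw [div_lt_iff₀ hδpos] at hqR
    nlinarith
  set r : ℕ → ℚ := fun i => ((round ((q:ℝ) * P.coeff i) : ℤ) : ℚ) / (q:ℚ) with hr
  set scor : ℤ →₀ ℚ := ∑ i ∈ Finset.range (dP+1), Finsupp.single ((N:ℤ) + i) (r i) with hscor
  have hrerr : ∀ i, |(r i : ℝ) - P.coeff i| ≤ 1/(q:ℝ) := by
    intro i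
    have heq : (r i : ℝ) - P.coeff i =
        ((round ((q:ℝ) * P.coeff i) : ℝ) - (q:ℝ) * P.coeff i)/(q:ℝ) := by
      rw [hr]; push_cast; field_simp
    rw [heq, abs_div, abs_of_pos hqpos]
    have h1 := abs_sub_round ((q:ℝ) * P.coeff i)
    rw [abs_sub_comm] at h1
    exact (div_le_div_iff_of_pos_right hqpos).2 (by linarith)
  have hsval : ∀ n : ℤ, scor n = 0 ∨ ((N:ℤ) ≤ n ∧ ∃ i, scor n = r i) := by
    intro n
    rw [hscor, Finsupp.finset_sum_apply]
    by_cases hex : ∃ i ∈ Finset.range (dP+1), (N:ℤ) + i = n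
    · obtain ⟨i₀, hi₀m, hi₀⟩ := hex
      refine Or.inr ⟨by omega, i₀, ?_⟩
      rw [Finset.sum_eq_single_of_mem i₀ hi₀m]
      · rw [hi₀]; exact Finsupp.single_eq_same
      · intro j hjm hj
        apply Finsupp.single_eq_of_ne'
        omega
    · refine Or.inl (Finset.sum_eq_zero fun i hi => ?_)
      apply Finsupp.single_eq_of_ne'
      intro h
      exact hex ⟨i, hi, h⟩
  refine ⟨cstar - scor, ?_, ?_⟩
  · intro n
    rw [Finsupp.sub_apply]
    rcases hsval n with h | ⟨hn, i, h⟩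
    · rw [h, sub_zero]; exact hstar n
    · have hc0 : cstar n = 0 := by
        rw [← Finsupp.notMem_support_iff]
        intro hmem
        have := hNS n (by rw [hS]; exact Finset.mem_union_right _ hmem)
        omega
      rw [h, hc0, zero_sub, hr]
      exact memD_neg (memD_int_div _ q hq0 hqD)
  · intro x hxF
    have ht : (0:ℝ) < Real.exp x := Real.exp_pos x
    set t : ℝ := Real.exp x with htdef
    have htN : (0:ℝ) < t ^ N := hzpow t ht
    have htb : t ∈ Set.Icc (0:ℝ) b := ⟨ht.le, Real.exp_le_exp.2 (hM x hxF)⟩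
    set Qt : ℝ := ∑ i ∈ Finset.range (dP+1), (r i : ℝ) * t ^ i with hQt
    have hQev : ev scor t = t ^ N * Qt := by
      rw [hscor, ev_finset_sum, hQt, Finset.mul_sum]
      refine Finset.sum_congr rfl fun i hi => ?_
      rw [ev_single, zpow_add₀ (ne_of_gt ht), zpow_natCast]
      ring
    have hPQ : |Qt - P.eval t| ≤ Bnd / q := by
      have hPt : P.eval t = ∑ i ∈ Finset.range (dP+1), P.coeff i * t ^ i :=
        Polynomial.eval_eq_sum_range t
      rw [hPt, hQt, ← Finset.sum_sub_distrib]
      calc |∑ i ∈ Finset.range (dP+1), ((r i : ℝ) * t ^ i - P.coeff i * t ^ i)|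
          ≤ ∑ i ∈ Finset.range (dP+1), |(r i : ℝ) * t ^ i - P.coeff i * t ^ i| :=
            Finset.abs_sum_le_sum_abs _ _
        _ ≤ ∑ i ∈ Finset.range (dP+1), (1/(q:ℝ)) * b' ^ dP := by
            refine Finset.sum_le_sum fun i hi => ?_
            rw [← sub_mul, abs_mul]
            have h1 : |t ^ i| ≤ b' ^ dP := by
              rw [abs_of_nonneg (pow_nonneg ht.le i)]
              calc t ^ i ≤ b' ^ i := by
                    apply pow_le_pow_left₀ ht.le
                    exact le_trans htb.2 (le_max_right _ _)
                _ ≤ b' ^ dP := by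
                    apply pow_le_pow_right₀ hb'1
                    exact Nat.lt_succ_iff.1 (Finset.mem_range.1 hi)
            have h2 := hrerr i
            apply mul_le_mul h2 h1 (abs_nonneg _)
            positivity
        _ = Bnd / q := by
            rw [Finset.sum_const, Finset.card_range, hBnd]
            push_cast
            ring
    have hPφ : |P.eval t - φ t| < δ/2 := hP t htb
    have hQφ : |Qt - φ t| < δ := by
      calc |Qt - φ t| ≤ |Qt - P.eval t| + |P.eval t - φ t| := abs_sub_le _ _ _
        _ < Bnd/q + δ/2 := by linarith [hPQ, hPφ]
        _ ≤ δ := by linarith [hErr]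
    have hQab := abs_lt.1 hQφ
    have hφt : φ t = Ahat t + δ := rfl
    have hQlow : Ahat t < Qt := by rw [hφt] at hQab; linarith [hQab.2]
    have hQhigh : Qt < Bhat t := by
      have hch := channel x hxF
      rw [hφt] at hQab
      have h1 : Qt < Ahat t + 2*δ := by linarith [hQab.2]
      calc Qt < Ahat t + 2*δ := h1
        _ ≤ Bhat t := by linarith [hch]
    have h0A : (0:ℝ) ≤ Ahat t := le_max_left _ _
    have hlA : ev l t / t ^ N ≤ Ahat t := le_max_right _ _
    have hBu0 : Bhat t ≤ ev u₀ t / t ^ N := min_le_left _ _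
    have hBu1 : Bhat t ≤ ev u₁ t / t ^ N := min_le_right _ _
    have hca : ev (cstar - scor) t = ev cstar t - ev scor t := ev_sub _ _ _
    have hu0t : ev u₀ t = ev cstar t - ev cg₀ t := by rw [hu₀, ev_sub]
    have hu1t : ev u₁ t = ev cstar t - ev cg₁ t := by rw [hu₁, ev_sub]
    have hlt : ev l t = ev cstar t - ev cother t := by rw [hl, ev_sub]
    have hsl : 0 < ev scor t := by
      rw [hQev]; exact mul_pos htN (lt_of_le_of_lt h0A hQlow)
    have hsu0 : ev scor t < ev u₀ t := by
      rw [hQev]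
      have := lt_of_lt_of_le hQhigh hBu0
      calc t ^ N * Qt < t ^ N * (ev u₀ t / t ^ N) := by
            exact (mul_lt_mul_iff_right₀ htN).2 this
        _ = ev u₀ t := by field_simp
    have hsu1 : ev scor t < ev u₁ t := by
      rw [hQev]
      have := lt_of_lt_of_le hQhigh hBu1
      calc t ^ N * Qt < t ^ N * (ev u₁ t / t ^ N) := by
            exact (mul_lt_mul_iff_right₀ htN).2 this
        _ = ev u₁ t := by field_simp
    have hsll : ev l t < ev scor t := by
      rw [hQev]
      have h1 : ev l t / t ^ N < Qt := lt_of_le_of_lt hlA hQlow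
      calc ev l t = t ^ N * (ev l t / t ^ N) := by field_simp
        _ < t ^ N * Qt := (mul_lt_mul_iff_right₀ htN).2 h1
    refine ⟨by rw [hca]; linarith [hsu0], by rw [hca]; linarith [hsu1],
      by rw [hca]; linarith [hsl], by rw [hca]; linarith [hsll]⟩

lemma strict_case_ba (F : Set ℝ) (hF : IsClosed F) (𝔫 : Supernatural) (h𝔫 : 𝔫.Infinite)
    (hba : BddAbove F) (g₀ g₁ h₀ h₁ : ℝ → ℝ)
    (hg₀ : IsLaurentExp 𝔫 g₀) (hg₁ : IsLaurentExp 𝔫 g₁)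
    (hh₀ : IsLaurentExp 𝔫 h₀) (hh₁ : IsLaurentExp 𝔫 h₁)
    (hstrict : ∀ x ∈ F, (g₀ x < h₀ x ∧ g₀ x < h₁ x) ∧ (g₁ x < h₀ x ∧ g₁ x < h₁ x)) :
    ∃ a : ℝ → ℝ, IsLaurentExp 𝔫 a ∧ ∀ x ∈ F,
      (g₀ x < a x ∧ g₁ x < a x) ∧ (a x < h₀ x ∧ a x < h₁ x) := by
  classical
  obtain ⟨cg₀, hcg₀, hfg₀⟩ := hg₀
  obtain ⟨cg₁, hcg₁, hfg₁⟩ := hg₁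
  obtain ⟨ch₀, hch₀, hfh₀⟩ := hh₀
  obtain ⟨ch₁, hch₁, hfh₁⟩ := hh₁
  obtain ⟨M, hM⟩ := hba
  have hM' : ∀ x ∈ F, x ≤ M := fun x hx => hM hx
  have e0 : ∀ x, g₀ x = ev cg₀ (Real.exp x) := fun x => by rw [hfg₀ x, ev_exp]
  have e1 : ∀ x, g₁ x = ev cg₁ (Real.exp x) := fun x => by rw [hfg₁ x, ev_exp]
  have f0 : ∀ x, h₀ x = ev ch₀ (Real.exp x) := fun x => by rw [hfh₀ x, ev_exp]
  have f1 : ∀ x, h₁ x = ev ch₁ (Real.exp x) := fun x => by rw [hfh₁ x, ev_exp]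
  -- choose the lex-smaller of ch₀, ch₁
  have hchoice : ∃ cstar cother : ℤ →₀ ℚ,
      (∀ n, 𝔫.memD (cstar n)) ∧
      ((cstar = ch₀ ∧ cother = ch₁) ∨ (cstar = ch₁ ∧ cother = ch₀)) ∧
      (cstar - cother = 0 ∨ ∃ h : cstar - cother ≠ 0,
        (cstar - cother) ((cstar - cother).support.min' (Finsupp.support_nonempty_iff.2 h)) < 0) := by
    by_cases hd : ch₀ - ch₁ = 0
    · exact ⟨ch₀, ch₁, hch₀, Or.inl ⟨rfl, rfl⟩, Or.inl hd⟩
    · rcases lt_or_gt_of_ne (Finsupp.mem_support_iff.1 ((ch₀ - ch₁).support.min'_mem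
        (Finsupp.support_nonempty_iff.2 hd))) with hneg | hpos
      · exact ⟨ch₀, ch₁, hch₀, Or.inl ⟨rfl, rfl⟩, Or.inr ⟨hd, hneg⟩⟩
      · have hne : ch₁ - ch₀ = -(ch₀ - ch₁) := (neg_sub ch₀ ch₁).symm
        have hd' : ch₁ - ch₀ ≠ 0 := by
          intro h
          rw [hne, neg_eq_zero] at h
          exact hd h
        refine ⟨ch₁, ch₀, hch₁, Or.inr ⟨rfl, rfl⟩, Or.inr ⟨hd', ?_⟩⟩
        simp only [hne, Finsupp.support_neg, Finsupp.neg_apply]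
        simpa using hpos
  obtain ⟨cstar, cother, hstarD, hor, hcond⟩ := hchoice
  have hs0' : ∀ x ∈ F, ev cg₀ (Real.exp x) < ev cstar (Real.exp x) := by
    intro x hx
    rcases hor with ⟨h1, -⟩ | ⟨h1, -⟩ <;> rw [h1, ← e0 x]
    · rw [← f0 x]; exact ((hstrict x hx).1).1
    · rw [← f1 x]; exact ((hstrict x hx).1).2
  have hs1' : ∀ x ∈ F, ev cg₁ (Real.exp x) < ev cstar (Real.exp x) := by
    intro x hx
    rcases hor with ⟨h1, -⟩ | ⟨h1, -⟩ <;> rw [h1, ← e1 x]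
    · rw [← f0 x]; exact ((hstrict x hx).2).1
    · rw [← f1 x]; exact ((hstrict x hx).2).2
  have ho0' : ∀ x ∈ F, ev cg₀ (Real.exp x) < ev cother (Real.exp x) := by
    intro x hx
    rcases hor with ⟨-, h1⟩ | ⟨-, h1⟩ <;> rw [h1, ← e0 x]
    · rw [← f1 x]; exact ((hstrict x hx).1).2
    · rw [← f0 x]; exact ((hstrict x hx).1).1
  have ho1' : ∀ x ∈ F, ev cg₁ (Real.exp x) < ev cother (Real.exp x) := by
    intro x hx
    rcases hor with ⟨-, h1⟩ | ⟨-, h1⟩ <;> rw [h1, ← e1 x]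
    · rw [← f1 x]; exact ((hstrict x hx).2).2
    · rw [← f0 x]; exact ((hstrict x hx).2).1
  obtain ⟨ca, hcaD, hca⟩ := aux_main F hF 𝔫 h𝔫 M hM' cstar cother cg₀ cg₁ hstarD hcond
    hs0' hs1' ho0' ho1'
  refine ⟨fun x => ca.sum fun n q => (q:ℝ) * Real.exp (n * x), ⟨ca, hcaD, fun x => rfl⟩, ?_⟩
  intro x hx
  obtain ⟨k0, k1, k2, k3⟩ := hca x hx
  have ea : (ca.sum fun n q => (q:ℝ) * Real.exp (n * x)) = ev ca (Real.exp x) := ev_exp ca x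
  beta_reduce
  rw [ea]
  constructor
  · exact ⟨by rw [e0 x]; exact k0, by rw [e1 x]; exact k1⟩
  · rcases hor with ⟨h1, h2⟩ | ⟨h1, h2⟩
    · exact ⟨by rw [f0 x, ← h1]; exact k2, by rw [f1 x, ← h2]; exact k3⟩
    · exact ⟨by rw [f0 x, ← h2]; exact k3, by rw [f1 x, ← h1]; exact k2⟩

lemma isLaurentExp_reflect {𝔫 : Supernatural} {f : ℝ → ℝ} (h : IsLaurentExp 𝔫 f) :
    IsLaurentExp 𝔫 (fun x => f (-x)) := by
  obtain ⟨c, hc, hf⟩ := h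
  refine ⟨Finsupp.equivMapDomain (Equiv.neg ℤ) c, fun n => ?_, fun x => ?_⟩
  · rw [Finsupp.equivMapDomain_apply]; exact hc _
  · show f (-x) = _
    rw [hf (-x), Finsupp.sum_equivMapDomain]
    refine Finsupp.sum_congr fun n _ => ?_
    congr 1
    rw [show ((Equiv.neg ℤ) n : ℤ) = -n from rfl]
    push_cast
    ring

lemma strict_case (F : Set ℝ) (hF : IsClosed F) (𝔫 : Supernatural) (h𝔫 : 𝔫.Infinite)
    (hsb : BddAbove F ∨ BddBelow F) (g₀ g₁ h₀ h₁ : ℝ → ℝ)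
    (hg₀ : IsLaurentExp 𝔫 g₀) (hg₁ : IsLaurentExp 𝔫 g₁)
    (hh₀ : IsLaurentExp 𝔫 h₀) (hh₁ : IsLaurentExp 𝔫 h₁)
    (hstrict : ∀ x ∈ F, (g₀ x < h₀ x ∧ g₀ x < h₁ x) ∧ (g₁ x < h₀ x ∧ g₁ x < h₁ x)) :
    ∃ a : ℝ → ℝ, IsLaurentExp 𝔫 a ∧ ∀ x ∈ F,
      (g₀ x < a x ∧ g₁ x < a x) ∧ (a x < h₀ x ∧ a x < h₁ x) := by
  rcases hsb with hba | hbb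
  · exact strict_case_ba F hF 𝔫 h𝔫 hba g₀ g₁ h₀ h₁ hg₀ hg₁ hh₀ hh₁ hstrict
  · set F' : Set ℝ := Neg.neg ⁻¹' F with hF'def
    have hF' : IsClosed F' := hF.preimage continuous_neg
    have hmem : ∀ x : ℝ, x ∈ F' ↔ -x ∈ F := fun x => Iff.rfl
    have hba' : BddAbove F' := by
      obtain ⟨β, hβ⟩ := hbb
      refine ⟨-β, fun x hx => ?_⟩
      have := hβ (hmem x |>.1 hx)
      linarith
    obtain ⟨a', ha'L, ha'⟩ := strict_case_ba F' hF' 𝔫 h𝔫 hba'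
      (fun x => g₀ (-x)) (fun x => g₁ (-x)) (fun x => h₀ (-x)) (fun x => h₁ (-x))
      (isLaurentExp_reflect hg₀) (isLaurentExp_reflect hg₁)
      (isLaurentExp_reflect hh₀) (isLaurentExp_reflect hh₁)
      (fun x hx => hstrict (-x) (hmem x |>.1 hx))
    refine ⟨fun x => a' (-x), isLaurentExp_reflect ha'L, fun x hx => ?_⟩
    have hx' : -x ∈ F' := by
      rw [hmem]; simpa using hx
    have := ha' (-x) hx'
    simpa using this


end RieszAux

/-- If the closed set `F ⊆ ℝ` is bounded above or bounded below and `𝔫` is an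
infinite supernatural number, then the ordered abelian group
`(D_𝔫[e^x, e^{-x}], (D_𝔫[e^x, e^{-x}])⁺_F)` has the Riesz interpolation property. -/
theorem laurent_riesz_interpolation_of_semibounded
    (F : Set ℝ) (hF : IsClosed F) (𝔫 : Supernatural) (h𝔫 : 𝔫.Infinite)
    (hsb : BddAbove F ∨ BddBelow F)
    (g₀ g₁ h₀ h₁ : ℝ → ℝ)
    (hg₀ : IsLaurentExp 𝔫 g₀) (hg₁ : IsLaurentExp 𝔫 g₁)
    (hh₀ : IsLaurentExp 𝔫 h₀) (hh₁ : IsLaurentExp 𝔫 h₁)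
    (h00 : LaurentLe F g₀ h₀) (h01 : LaurentLe F g₀ h₁)
    (h10 : LaurentLe F g₁ h₀) (h11 : LaurentLe F g₁ h₁) :
    ∃ a : ℝ → ℝ, IsLaurentExp 𝔫 a ∧
      LaurentLe F g₀ a ∧ LaurentLe F g₁ a ∧ LaurentLe F a h₀ ∧ LaurentLe F a h₁ := by
  rcases h00 with heq | h00s
  · rw [heq] at h10
    exact ⟨g₀, hg₀, Or.inl rfl, h10, Or.inl heq, h01⟩
  rcases h01 with heq | h01s
  · rw [heq] at h11
    exact ⟨g₀, hg₀, Or.inl rfl, h11, Or.inr h00s, Or.inl heq⟩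
  rcases h10 with heq | h10s
  · rw [heq] at h00s
    exact ⟨g₁, hg₁, Or.inr h00s, Or.inl rfl, Or.inl heq, h11⟩
  rcases h11 with heq | h11s
  · rw [heq] at h01s
    exact ⟨g₁, hg₁, Or.inr h01s, Or.inl rfl, Or.inr h10s, Or.inl heq⟩
  obtain ⟨a, haL, ha⟩ := strict_case F hF 𝔫 h𝔫 hsb g₀ g₁ h₀ h₁ hg₀ hg₁ hh₀ hh₁
    (fun x hx => ⟨⟨h00s x hx, h01s x hx⟩, h10s x hx, h11s x hx⟩)
  exact ⟨a, haL, Or.inr (fun x hx => ((ha x hx).1).1), Or.inr (fun x hx => ((ha x hx).1).2),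
    Or.inr (fun x hx => ((ha x hx).2).1), Or.inr (fun x hx => ((ha x hx).2).2)⟩
end

section
/- Let F be a closed subset of ℝ that is neither bounded above nor bounded below, and let 𝔫 be an infinite supernatural number. Then the ordered abelian group of D_𝔫-coefficient Laurent polynomials in e^x, with the strict pointwise order on F, fails the Riesz interpolation property. -/
open Filter Real Topology

lemma memD_of_den_one (s : Supernatural) (x : ℚ) (h : x.den = 1) : s.memD x := by
  intro p hp
  simp [h, Nat.factorization_one]

lemma isLaurentExp_of_int (s : Supernatural) (f : ℝ → ℝ) (d : ℤ →₀ ℤ)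
    (h : ∀ x, f x = d.sum fun n z => (z : ℝ) * Real.exp (n * x)) : IsLaurentExp s f := by
  refine ⟨Finsupp.mapRange (fun z : ℤ => (z : ℚ)) (by simp) d, fun n => ?_, fun x => ?_⟩
  · exact memD_of_den_one s _ (by simp [Finsupp.mapRange_apply])
  · rw [h x, Finsupp.sum_mapRange_index (by simp)]
    simp

lemma lemA (F : Set ℝ) (hna : ¬ BddAbove F) (c : ℤ →₀ ℚ) (C : ℝ)
    (hb : ∀ x ∈ F, |c.sum fun n a => (a : ℝ) * Real.exp (n * x)| ≤ C) :
    ∀ n ∈ c.support, n ≤ 0 := by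
  by_contra hcon
  push_neg at hcon
  obtain ⟨n, hn, hn0⟩ := hcon
  have hne : c.support.Nonempty := ⟨n, hn⟩
  set m := c.support.max' hne with hm
  have hmmem : m ∈ c.support := c.support.max'_mem hne
  have hmpos : 0 < m := lt_of_lt_of_le hn0 (c.support.le_max' n hn)
  set f : ℝ → ℝ := fun x => c.sum fun n a => (a : ℝ) * Real.exp (n * x) with hf
  have key : ∀ x : ℝ, f x * Real.exp (-(m : ℝ) * x)
      = ∑ j ∈ c.support, (c j : ℝ) * Real.exp (((j : ℝ) - m) * x) := by
    intro x
    show (∑ j ∈ c.support, (c j : ℝ) * Real.exp ((j : ℝ) * x)) * Real.exp (-(m : ℝ) * x)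
      = ∑ j ∈ c.support, (c j : ℝ) * Real.exp (((j : ℝ) - m) * x)
    rw [Finset.sum_mul]
    refine Finset.sum_congr rfl fun j _ => ?_
    rw [mul_assoc, ← Real.exp_add]
    ring_nf
  have T1 : Tendsto (fun x : ℝ => f x * Real.exp (-(m : ℝ) * x)) atTop
      (𝓝 (c m : ℝ)) := by
    have h0 : Tendsto (fun x : ℝ => ∑ j ∈ c.support, (c j : ℝ) * Real.exp (((j : ℝ) - m) * x))
        atTop (𝓝 (∑ j ∈ c.support, if j = m then (c m : ℝ) else 0)) := by
      refine tendsto_finset_sum _ fun j hj => ?_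
      by_cases hjm : j = m
      · subst hjm
        simp only [sub_self, zero_mul, Real.exp_zero, mul_one, if_pos rfl]
        exact tendsto_const_nhds
      · rw [if_neg hjm]
        have hjlt : j < m := lt_of_le_of_ne (c.support.le_max' j hj) hjm
        have hneg : ((j : ℝ) - m) < 0 := by
          have : (j : ℝ) < m := by exact_mod_cast hjlt
          linarith
        have h1 : Tendsto (fun x : ℝ => Real.exp (((j : ℝ) - m) * x)) atTop (𝓝 0) :=
          Real.tendsto_exp_atBot.comp ((tendsto_const_mul_atBot_of_neg hneg).2 tendsto_id)
        simpa using h1.const_mul (c j : ℝ)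
    rw [Finset.sum_ite_eq' c.support m fun _ => (c m : ℝ), if_pos hmmem] at h0
    exact h0.congr fun x => (key x).symm
  have hseq : ∀ k : ℕ, ∃ y ∈ F, (k : ℝ) < y := fun k => not_bddAbove_iff.1 hna k
  choose u huF hu using hseq
  have hutop : Tendsto u atTop atTop :=
    tendsto_atTop_mono (fun k => (hu k).le) tendsto_natCast_atTop_atTop
  have T1' : Tendsto (fun k => f (u k) * Real.exp (-(m : ℝ) * u k)) atTop (𝓝 (c m : ℝ)) :=
    T1.comp hutop
  have hexp0 : Tendsto (fun k => Real.exp (-(m : ℝ) * u k)) atTop (𝓝 0) := by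
    have hneg : -(m : ℝ) < 0 := by
      have : (0 : ℝ) < m := by exact_mod_cast hmpos
      linarith
    exact Real.tendsto_exp_atBot.comp ((tendsto_const_mul_atBot_of_neg hneg).2 hutop)
  have T2 : Tendsto (fun k => f (u k) * Real.exp (-(m : ℝ) * u k)) atTop (𝓝 0) := by
    have hCexp : Tendsto (fun k => C * Real.exp (-(m : ℝ) * u k)) atTop (𝓝 0) := by
      simpa using hexp0.const_mul C
    refine squeeze_zero_norm (fun k => ?_) hCexp
    have h1 : |f (u k)| ≤ C := hb (u k) (huF k)
    have h2 : (0 : ℝ) < Real.exp (-(m : ℝ) * u k) := Real.exp_pos _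
    calc ‖f (u k) * Real.exp (-(m : ℝ) * u k)‖
        = |f (u k)| * Real.exp (-(m : ℝ) * u k) := by
          rw [Real.norm_eq_abs, abs_mul, abs_of_pos h2]
      _ ≤ C * Real.exp (-(m : ℝ) * u k) := mul_le_mul_of_nonneg_right h1 h2.le
  have hcm : (c m : ℝ) = 0 := tendsto_nhds_unique T1' T2
  have : c m = 0 := by exact_mod_cast hcm
  exact (Finsupp.mem_support_iff.1 hmmem) this

lemma lemB (F : Set ℝ) (hnb : ¬ BddBelow F) (c : ℤ →₀ ℚ) (C : ℝ)
    (hb : ∀ x ∈ F, |c.sum fun n a => (a : ℝ) * Real.exp (n * x)| ≤ C) :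
    ∀ n ∈ c.support, 0 ≤ n := by
  set c' := Finsupp.equivMapDomain (Equiv.neg ℤ) c with hc'
  have hF' : ¬ BddAbove ((fun x : ℝ => -x) '' F) := by
    intro ⟨M, hM⟩
    refine hnb ⟨-M, fun y hy => ?_⟩
    have : -y ≤ M := hM ⟨y, hy, rfl⟩
    linarith
  have hb' : ∀ x ∈ (fun x : ℝ => -x) '' F,
      |c'.sum fun n a => (a : ℝ) * Real.exp (n * x)| ≤ C := by
    rintro _ ⟨y, hy, rfl⟩
    have hsum : (c'.sum fun n a => (a : ℝ) * Real.exp (n * (-y)))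
        = c.sum fun n a => (a : ℝ) * Real.exp (n * y) := by
      rw [hc', Finsupp.sum_equivMapDomain]
      refine Finsupp.sum_congr fun j _ => ?_
      have : ((Equiv.neg ℤ) j : ℝ) * (-y) = (j : ℝ) * y := by
        simp [Equiv.neg_apply]
      rw [this]
    rw [hsum]
    exact hb y hy
  intro n hn
  have hmem : -n ∈ c'.support := by
    rw [Finsupp.mem_support_iff] at hn ⊢
    simpa [hc'] using hn
  have := lemA _ hF' c' C hb' (-n) hmem
  linarith

/-- If the closed set `F ⊆ ℝ` is neither bounded above nor bounded below and `𝔫`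
is an infinite supernatural number, then `(D_𝔫[e^x, e^{-x}], (D_𝔫[e^x, e^{-x}])⁺_F)` fails the
Riesz interpolation property. -/
theorem laurent_not_riesz_interpolation_of_not_semibounded
    (F : Set ℝ) (hF : IsClosed F) (𝔫 : Supernatural) (h𝔫 : 𝔫.Infinite)
    (hna : ¬ BddAbove F) (hnb : ¬ BddBelow F) :
    ∃ g₀ g₁ h₀ h₁ : ℝ → ℝ,
      IsLaurentExp 𝔫 g₀ ∧ IsLaurentExp 𝔫 g₁ ∧ IsLaurentExp 𝔫 h₀ ∧ IsLaurentExp 𝔫 h₁ ∧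
      LaurentLe F g₀ h₀ ∧ LaurentLe F g₀ h₁ ∧ LaurentLe F g₁ h₀ ∧ LaurentLe F g₁ h₁ ∧
      ¬ ∃ a : ℝ → ℝ, IsLaurentExp 𝔫 a ∧
        LaurentLe F g₀ a ∧ LaurentLe F g₁ a ∧ LaurentLe F a h₀ ∧ LaurentLe F a h₁ := by
  obtain ⟨β, hβF, hβ1⟩ := not_bddAbove_iff.1 hna 1
  have ht2 : (2 : ℝ) < Real.exp β := by
    have h1 : (2 : ℝ) < Real.exp 1 := by
      have := Real.exp_one_gt_d9
      norm_num at this ⊢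
      linarith
    exact h1.trans (Real.exp_lt_exp.2 hβ1)
  set t := Real.exp β with htdef
  have ht0 : 0 < t := Real.exp_pos β
  set N : ℕ := ⌊t / 2⌋₊ + 1 with hNdef
  have hNlt : (N : ℝ) < t := by
    have h1 : (⌊t / 2⌋₊ : ℝ) ≤ t / 2 := Nat.floor_le (by positivity)
    have h2 : (N : ℝ) ≤ t / 2 + 1 := by rw [hNdef]; push_cast; linarith
    linarith
  have hltN : t < 2 * N := by
    have h1 := Nat.lt_floor_add_one (t / 2)
    have h2 : t / 2 < (N : ℝ) := by rw [hNdef]; push_cast; linarith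
    linarith
  have hN1 : (1 : ℝ) ≤ (N : ℝ) := by
    have : (1 : ℕ) ≤ N := Nat.le_add_left 1 _
    exact_mod_cast this
  have hN2 : (1 : ℝ) ≤ (N : ℝ) ^ 2 := by nlinarith
  have hNpos : (0 : ℝ) < (N : ℝ) := by linarith
  refine ⟨fun _ => -1, fun x => ((N : ℝ) - Real.exp x) * (Real.exp x - 2 * N),
    fun x => Real.exp (2 * x), fun _ => (N : ℝ) ^ 2, ?_, ?_, ?_, ?_, ?_, ?_, ?_, ?_, ?_⟩
  · exact isLaurentExp_of_int 𝔫 _ (Finsupp.single 0 (-1)) fun x => by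
      rw [Finsupp.sum_single_index (by simp)]; simp
  · refine isLaurentExp_of_int 𝔫 _
      (Finsupp.single 2 (-1) + Finsupp.single 1 (3 * (N : ℤ)) +
        Finsupp.single 0 (-2 * (N : ℤ) ^ 2)) fun x => ?_
    rw [Finsupp.sum_add_index' (by simp) (fun a b₁ b₂ => by push_cast; ring),
      Finsupp.sum_add_index' (by simp) (fun a b₁ b₂ => by push_cast; ring),
      Finsupp.sum_single_index (by simp), Finsupp.sum_single_index (by simp),
      Finsupp.sum_single_index (by simp)]
    push_cast
    simp only [zero_mul, one_mul, Real.exp_zero, mul_one]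
    rw [show ((2 : ℝ)) * x = x + x by ring, Real.exp_add]
    ring
  · exact isLaurentExp_of_int 𝔫 _ (Finsupp.single 2 1) fun x => by
      rw [Finsupp.sum_single_index (by simp)]; push_cast; ring_nf
  · exact isLaurentExp_of_int 𝔫 _ (Finsupp.single 0 ((N : ℤ) ^ 2)) fun x => by
      rw [Finsupp.sum_single_index (by simp)]; push_cast; simp
  · refine Or.inr fun x _ => ?_
    have := Real.exp_pos (2 * x)
    dsimp only
    linarith
  · refine Or.inr fun x _ => ?_
    dsimp only
    nlinarith
  · refine Or.inr fun x _ => ?_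
    dsimp only
    have he : Real.exp (2 * x) = Real.exp x * Real.exp x := by
      rw [show (2 : ℝ) * x = x + x by ring, Real.exp_add]
    have hex : 0 < Real.exp x := Real.exp_pos x
    rw [he]
    nlinarith [sq_nonneg (Real.exp x - (N : ℝ)), mul_pos hex hNpos]
  · refine Or.inr fun x _ => ?_
    dsimp only
    nlinarith [sq_nonneg (2 * Real.exp x - 3 * (N : ℝ)), hN2]
  rintro ⟨a, ⟨c, _, hsum⟩, hg₀a, hg₁a, hah₀, hah₁⟩
  have hle : ∀ {f g : ℝ → ℝ}, LaurentLe F f g → ∀ x ∈ F, f x ≤ g x := by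
    rintro f g (rfl | h) x hx
    · exact le_refl _
    · exact (h x hx).le
  have hbd : ∀ x ∈ F, |a x| ≤ (N : ℝ) ^ 2 := by
    intro x hx
    have h1 : (-1 : ℝ) ≤ a x := hle hg₀a x hx
    have h2 : a x ≤ (N : ℝ) ^ 2 := hle hah₁ x hx
    rw [abs_le]
    exact ⟨by linarith, h2⟩
  have hbd' : ∀ x ∈ F, |c.sum fun n q => (q : ℝ) * Real.exp (n * x)| ≤ (N : ℝ) ^ 2 :=
    fun x hx => by rw [← hsum x]; exact hbd x hx
  have hsupp : c.support ⊆ {0} := by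
    intro n hn
    have h1 := lemA F hna c _ hbd' n hn
    have h2 := lemB F hnb c _ hbd' n hn
    simp [le_antisymm h1 h2]
  have hconst : ∀ x : ℝ, a x = ((c 0 : ℚ) : ℝ) := by
    intro x
    rw [hsum x, Finsupp.support_subset_singleton.1 hsupp,
      Finsupp.sum_single_index (by simp)]
    simp
  set r : ℝ := ((c 0 : ℚ) : ℝ) with hr
  have hrpos : 0 < r := by
    have h1 : ((N : ℝ) - Real.exp β) * (Real.exp β - 2 * N) ≤ a β := hle hg₁a β hβF
    have h2 : 0 < ((N : ℝ) - t) * (t - 2 * N) := by nlinarith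
    rw [hconst β] at h1
    rw [← htdef] at h1
    linarith
  obtain ⟨y, hyF, hy⟩ := not_bddBelow_iff.1 hnb (Real.log r / 2)
  have h3 : a y ≤ Real.exp (2 * y) := hle hah₀ y hyF
  rw [hconst y] at h3
  have h4 : Real.exp (2 * y) < r := by
    have hlt : 2 * y < Real.log r := by linarith
    calc Real.exp (2 * y) < Real.exp (Real.log r) := Real.exp_lt_exp.2 hlt
      _ = r := Real.exp_log hrpos
  linarith
end

section
/- Let 𝔭 and 𝔮 be relatively prime supernatural numbers and let G be an abelian group. If both G ⊗ D_𝔭 and G ⊗ D_𝔮 are torsion-free, then G is torsion-free. -/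
open scoped TensorProduct

/-- Two supernatural numbers are relatively prime if no prime divides both. -/
def Supernatural.Coprime (s t : Supernatural) : Prop :=
  ∀ p : ℕ, p.Prime → s p = 0 ∨ t p = 0

/-- The subgroup `D` of `ℚ` is exactly `D_𝔫`. -/
def IsDGroup (s : Supernatural) (D : AddSubgroup ℚ) : Prop :=
  ∀ x : ℚ, x ∈ D ↔ s.memD x

section Aux

open Pointwise

set_option maxHeartbeats 1000000
set_option synthInstance.maxHeartbeats 200000

/-- Torsion-free abelian groups are flat over `ℤ`. -/
lemma flat_of_torsionFree (M : Type*) [AddCommGroup M] [NoZeroSMulDivisors ℤ M] :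
    Module.Flat ℤ M := by
  rw [Module.Flat.iff_rTensor_injective']
  intro I
  obtain ⟨n, rfl⟩ : ∃ n : ℤ, I = Ideal.span {n} := (IsPrincipalIdealRing.principal I).principal
  by_cases hn : n = 0
  · subst hn
    rw [Ideal.span_singleton_eq_bot.mpr rfl]
    intro a b _
    exact Subsingleton.elim a b
  · have hnmem : n ∈ Ideal.span {n} := Ideal.mem_span_singleton_self n
    have hsurj : ∀ z : (Ideal.span {n}) ⊗[ℤ] M,
        ∃ x : M, (⟨n, hnmem⟩ : Ideal.span {n}) ⊗ₜ[ℤ] x = z := by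
      intro z
      induction z using TensorProduct.induction_on with
      | zero => exact ⟨0, TensorProduct.tmul_zero _ _⟩
      | tmul i x =>
        obtain ⟨m, hm⟩ := Ideal.mem_span_singleton'.mp i.2
        refine ⟨m • x, ?_⟩
        rw [← TensorProduct.smul_tmul]
        congr 1
        ext
        simpa [smul_eq_mul] using hm
      | add z1 z2 h1 h2 =>
        obtain ⟨x1, hx1⟩ := h1
        obtain ⟨x2, hx2⟩ := h2
        exact ⟨x1 + x2, by rw [TensorProduct.tmul_add, hx1, hx2]⟩
    rw [injective_iff_map_eq_zero]
    intro z hz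
    obtain ⟨x, rfl⟩ := hsurj z
    rw [LinearMap.rTensor_tmul] at hz
    have : n • x = 0 := by
      have := congrArg (TensorProduct.lid ℤ M) hz
      simpa using this
    rcases smul_eq_zero.mp this with h | h
    · exact absurd h hn
    · rw [h, TensorProduct.tmul_zero]

lemma noZeroSMulDivisors_subgroup (D : AddSubgroup ℚ) : NoZeroSMulDivisors ℤ D := by
  constructor
  intro c x h
  have h' : c • (x : ℚ) = 0 := by
    have := congrArg (Subtype.val) h
    simpa using this
  rcases smul_eq_zero.mp h' with h | h
  · exact Or.inl h
  · exact Or.inr (Subtype.ext h)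

/-- Key lemma: if `G ⊗ D` is torsion-free with `D = D_𝔰`, then the order of any finite-order
element of `G` divides `𝔰`. -/
lemma key_lemma (s : Supernatural) (D : AddSubgroup ℚ) (hD : IsDGroup s D)
    (G : Type*) [AddCommGroup G] (h1 : NoZeroSMulDivisors ℤ (G ⊗[ℤ] D))
    (g : G) (hg : IsOfFinAddOrder g) : Supernatural.natDvd (addOrderOf g) s := by
  classical
  haveI := noZeroSMulDivisors_subgroup D
  haveI := flat_of_torsionFree D
  set d := addOrderOf g with hd
  have hdpos : 0 < d := hg.addOrderOf_pos
  have hone : (1 : ℚ) ∈ D := by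
    rw [hD]
    intro p hp
    simp [Supernatural.memD]
  set I : Ideal ℤ := Ideal.span {(d : ℤ)} with hI
  set f : ℤ →ₗ[ℤ] G := LinearMap.toSpanSingleton ℤ G g with hf
  have hker : I = LinearMap.ker f := by
    ext n
    rw [hI, Ideal.mem_span_singleton, LinearMap.mem_ker, hf,
      LinearMap.toSpanSingleton_apply, addOrderOf_dvd_iff_zsmul_eq_zero]
  set fbar : (ℤ ⧸ I) →ₗ[ℤ] G := Submodule.liftQ I f hker.le with hfbar
  have hinj : Function.Injective fbar := by
    rw [← LinearMap.ker_eq_bot, hfbar, Submodule.ker_liftQ_eq_bot I f hker.le hker.ge]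
  have hΦ : Function.Injective (LinearMap.rTensor D fbar) :=
    Module.Flat.rTensor_preserves_injective_linearMap fbar hinj
  set u : (ℤ ⧸ I) ⊗[ℤ] D := (Ideal.Quotient.mk I 1) ⊗ₜ[ℤ] (⟨1, hone⟩ : D) with hu
  have hgz : g ⊗ₜ[ℤ] (⟨1, hone⟩ : D) = (0 : G ⊗[ℤ] D) := by
    have hdg : (d : ℤ) • g = (0 : G) := by
      rw [Nat.cast_smul_eq_nsmul]
      exact addOrderOf_nsmul_eq_zero g
    have h2 : (d : ℤ) • (g ⊗ₜ[ℤ] (⟨1, hone⟩ : D)) = 0 := by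
      rw [TensorProduct.smul_tmul', hdg, TensorProduct.zero_tmul]
    rcases smul_eq_zero.mp h2 with h | h
    · exact absurd (Int.natCast_eq_zero.mp h) hdpos.ne'
    · exact h
  have hu0 : u = 0 := by
    apply hΦ
    rw [map_zero, hu, LinearMap.rTensor_tmul]
    have : fbar (Ideal.Quotient.mk I 1) = g := by
      show fbar (Submodule.Quotient.mk (1 : ℤ)) = g
      rw [hfbar, Submodule.liftQ_apply, hf, LinearMap.toSpanSingleton_apply, one_smul]
    rw [this, hgz]
  have := congrArg (TensorProduct.quotTensorEquivQuotSMul D I) hu0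
  rw [hu, map_zero, TensorProduct.quotTensorEquivQuotSMul_mk_tmul, one_smul] at this
  have hmem : (⟨1, hone⟩ : D) ∈ (I • ⊤ : Submodule ℤ D) :=
    (Submodule.Quotient.mk_eq_zero _).mp this
  rw [hI, Submodule.ideal_span_singleton_smul] at hmem
  obtain ⟨y, -, hy⟩ := Submodule.mem_map.mp hmem
  have hy' : (d : ℤ) • (y : ℚ) = 1 := by
    have := congrArg Subtype.val hy
    simpa [DistribMulAction.toLinearMap] using this
  have hyval : (y : ℚ) = (d : ℚ)⁻¹ := by
    have hd0 : (d : ℚ) ≠ 0 := Nat.cast_ne_zero.mpr hdpos.ne'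
    field_simp
    rw [zsmul_eq_mul] at hy'
    push_cast at hy' ⊢
    linarith [hy']
  have := (hD y).mp y.2
  rw [Supernatural.memD, hyval, Rat.inv_natCast_den_of_pos hdpos] at this
  exact this

end Aux

/-- if `𝔭`, `𝔮` are relatively prime supernatural numbers and both `G ⊗ D_𝔭` and
`G ⊗ D_𝔮` are torsion-free abelian groups, then so is `G`. -/
theorem torsionFree_of_tensor_torsionFree
    (𝔭 𝔮 : Supernatural) (hpq : Supernatural.Coprime 𝔭 𝔮)
    (Dp Dq : AddSubgroup ℚ) (hDp : IsDGroup 𝔭 Dp) (hDq : IsDGroup 𝔮 Dq)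
    (G : Type*) [AddCommGroup G]
    (h1 : NoZeroSMulDivisors ℤ (G ⊗[ℤ] Dp))
    (h2 : NoZeroSMulDivisors ℤ (G ⊗[ℤ] Dq)) :
    NoZeroSMulDivisors ℤ G := by
  constructor
  intro c g h
  by_cases hc : c = 0
  · exact Or.inl hc
  right
  have hfin : IsOfFinAddOrder g := by
    rw [isOfFinAddOrder_iff_nsmul_eq_zero]
    refine ⟨c.natAbs, Int.natAbs_pos.mpr hc, ?_⟩
    rw [← Nat.cast_smul_eq_nsmul ℤ]
    rcases Int.natAbs_eq c with he | he
    · rw [← he, h]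
    · rw [show ((c.natAbs : ℤ)) = -c from by omega, neg_smul, h, neg_zero]
  have hp := key_lemma 𝔭 Dp hDp G h1 g hfin
  have hq := key_lemma 𝔮 Dq hDq G h2 g hfin
  have hd1 : addOrderOf g = 1 := by
    by_contra hne
    have hd0 : addOrderOf g ≠ 0 := hfin.addOrderOf_pos.ne'
    obtain ⟨p, hprime, hdvd⟩ := Nat.exists_prime_and_dvd hne
    have hpos : 0 < (addOrderOf g).factorization p :=
      Nat.Prime.factorization_pos_of_dvd hprime hd0 hdvd
    have h1' := hp p hprime
    have h2' := hq p hprime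
    rcases hpq p hprime with hz | hz
    · rw [hz] at h1'
      have h0 : (addOrderOf g).factorization p = 0 := by
        exact_mod_cast le_antisymm h1' zero_le
      omega
    · rw [hz] at h2'
      have h0 : (addOrderOf g).factorization p = 0 := by
        exact_mod_cast le_antisymm h2' zero_le
      omega
  exact AddMonoid.addOrderOf_eq_one_iff.mp hd1
end

section
/- Let 𝔭 and 𝔮 be relatively prime supernatural numbers and G a torsion-free abelian group. Inside G ⊗ D_𝔭 ⊗ D_𝔮, the intersection of the subgroups G ⊗ D_𝔭 ⊗ 1 and G ⊗ 1 ⊗ D_𝔮 equals G ⊗ 1 ⊗ 1, and hence is isomorphic to G as an abelian group. -/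
open scoped TensorProduct

lemma exists_clear_denom (s : Supernatural) (D : AddSubgroup ℚ) (hD : IsDGroup s D)
    (h1 : (1:ℚ) ∈ D) (G : Type*) [AddCommGroup G] (x : G ⊗[ℤ] D) :
    ∃ n : ℕ, 0 < n ∧ (∀ p : ℕ, p.Prime → p ∣ n → s p ≠ 0) ∧
      ∃ g : G, (n : ℤ) • x = g ⊗ₜ[ℤ] (⟨1, h1⟩ : D) := by
  induction x using TensorProduct.induction_on with
  | zero =>
    exact ⟨1, one_pos, fun p hp hd => absurd (Nat.dvd_one.mp hd) hp.one_lt.ne', 0, by simp⟩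
  | tmul g d =>
    refine ⟨(d:ℚ).den, (d:ℚ).pos, ?_, (d:ℚ).num • g, ?_⟩
    · intro p hp hd hs0
      have hmem := (hD d).mp d.2 p hp
      rw [hs0] at hmem
      have : (↑d : ℚ).den.factorization p = 0 := by exact_mod_cast nonpos_iff_eq_zero.mp hmem
      exact (Nat.Prime.factorization_pos_of_dvd hp (d:ℚ).den_nz hd).ne' this
    · have key : (((d:ℚ).den : ℤ)) • d = ((d:ℚ).num) • (⟨1, h1⟩ : D) := by
        apply Subtype.ext
        push_cast [zsmul_eq_mul]
        simp [Rat.den_mul_eq_num]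
      rw [← TensorProduct.tmul_smul, key, TensorProduct.tmul_smul,
        TensorProduct.smul_tmul']
  | add x y hx hy =>
    obtain ⟨n, hn, hns, g, hg⟩ := hx
    obtain ⟨m, hm, hms, h, hh⟩ := hy
    refine ⟨n * m, Nat.mul_pos hn hm,
      fun p pp hd => ((pp.dvd_mul).mp hd).elim (hns p pp) (hms p pp),
      (m : ℤ) • g + (n : ℤ) • h, ?_⟩
    have : ((n * m : ℕ) : ℤ) • (x + y) = (m : ℤ) • ((n:ℤ) • x) + (n : ℤ) • ((m:ℤ) • y) := by
      push_cast
      rw [smul_add, ← mul_smul, ← mul_smul, mul_comm]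
    rw [this, hg, hh, TensorProduct.smul_tmul', TensorProduct.smul_tmul',
      ← TensorProduct.add_tmul]

/-- for relatively prime supernatural numbers `𝔭`, `𝔮` and a torsion-free abelian
group `G`, inside `G ⊗ D_𝔭 ⊗ D_𝔮` the intersection of the subgroups `G ⊗ D_𝔭 ⊗ 1` and
`G ⊗ 1 ⊗ D_𝔮` equals `G ⊗ 1 ⊗ 1`, which is isomorphic to `G` (the canonical map
`g ↦ (g ⊗ 1) ⊗ 1` is injective). -/
theorem tensor_intersection_eq_diagonal
    (𝔭 𝔮 : Supernatural) (hpq : Supernatural.Coprime 𝔭 𝔮)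
    (Dp Dq : AddSubgroup ℚ) (hDp : IsDGroup 𝔭 Dp) (hDq : IsDGroup 𝔮 Dq)
    (h1p : (1 : ℚ) ∈ Dp) (h1q : (1 : ℚ) ∈ Dq)
    (G : Type*) [AddCommGroup G] (hG : NoZeroSMulDivisors ℤ G) :
    (Set.range ((TensorProduct.mk ℤ (G ⊗[ℤ] Dp) Dq).flip ⟨1, h1q⟩) ∩
        Set.range (TensorProduct.map ((TensorProduct.mk ℤ G Dp).flip ⟨1, h1p⟩) LinearMap.id) =
      Set.range (((TensorProduct.mk ℤ (G ⊗[ℤ] Dp) Dq).flip ⟨1, h1q⟩).comp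
        ((TensorProduct.mk ℤ G Dp).flip ⟨1, h1p⟩))) ∧
    Function.Injective (((TensorProduct.mk ℤ (G ⊗[ℤ] Dp) Dq).flip ⟨1, h1q⟩).comp
        ((TensorProduct.mk ℤ G Dp).flip ⟨1, h1p⟩)) := by
  haveI := hG
  set φp := (TensorProduct.mk ℤ G Dp).flip ⟨1, h1p⟩ with hφp
  set A :=
    (TensorProduct.mk ℤ (G ⊗[ℤ] Dp) Dq).flip ⟨1, h1q⟩ with hA
  set B : G ⊗[ℤ] Dq →ₗ[ℤ] (G ⊗[ℤ] Dp) ⊗[ℤ] Dq := TensorProduct.map φp LinearMap.id with hB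
  have hφp_apply : ∀ g : G, φp g = g ⊗ₜ[ℤ] (⟨1, h1p⟩ : Dp) := fun g => rfl
  have hA_apply : ∀ x : G ⊗[ℤ] Dp, A x = x ⊗ₜ[ℤ] (⟨1, h1q⟩ : Dq) := fun x => rfl
  have hC_apply : ∀ g : G, (A.comp φp) g = (g ⊗ₜ[ℤ] (⟨1, h1p⟩ : Dp)) ⊗ₜ[ℤ] (⟨1, h1q⟩ : Dq) :=
    fun g => rfl
  constructor
  · ext z
    constructor
    · rintro ⟨⟨x, hx⟩, ⟨y, hy⟩⟩
      obtain ⟨n, hn, hns, g, hg⟩ := exists_clear_denom 𝔭 Dp hDp h1p G x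
      obtain ⟨m, hm, hms, h, hh⟩ := exists_clear_denom 𝔮 Dq hDq h1q G y
      have hnz : (n : ℤ) • z = (A.comp φp) g := by
        rw [← hx, ← map_zsmul A, hg, hC_apply, ← hA_apply, ← hφp_apply]
      have hmz : (m : ℤ) • z = (A.comp φp) h := by
        erw [← hy, ← map_zsmul B, hh, hC_apply]
      have hcop : Nat.Coprime n m := by
        by_contra hc
        obtain ⟨p, pp, hpn, hpm⟩ := Nat.Prime.not_coprime_iff_dvd.mp hc
        rcases hpq p pp with h0 | h0
        · exact hns p pp hpn h0
        · exact hms p pp hpm h0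
      have hbez : (1 : ℤ) = n * Nat.gcdA n m + m * Nat.gcdB n m := by
        have := Nat.gcd_eq_gcd_ab n m
        rwa [hcop, Nat.cast_one] at this
      refine ⟨(Nat.gcdA n m) • g + (Nat.gcdB n m) • h, ?_⟩
      rw [map_add, map_zsmul, map_zsmul, ← hnz, ← hmz, ← mul_smul, ← mul_smul,
        mul_comm _ (n : ℤ), mul_comm _ (m : ℤ), ← add_smul, ← hbez, one_smul]
    · rintro ⟨g, rfl⟩
      refine ⟨⟨φp g, rfl⟩, ⟨g ⊗ₜ[ℤ] (⟨1, h1q⟩ : Dq), ?_⟩⟩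
      rfl
  · -- injectivity
    set ιp : Dp →ₗ[ℤ] ℚ := Dp.subtype.toIntLinearMap with hιp
    set ιq : Dq →ₗ[ℤ] ℚ := Dq.subtype.toIntLinearMap with hιq
    set Φ :=
      (TensorProduct.comm ℤ G ℚ).toLinearMap ∘ₗ
        (TensorProduct.map LinearMap.id (LinearMap.mul' ℤ ℚ)) ∘ₗ
        (TensorProduct.assoc ℤ G ℚ ℚ).toLinearMap ∘ₗ
        TensorProduct.map (TensorProduct.map LinearMap.id ιp) ιq with hΦ
    set f := TensorProduct.mk ℤ ℚ G 1 with hf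
    have hΦC : ∀ g : G, Φ ((A.comp φp) g) = f g := by
      intro g
      have e := TensorProduct.map_tmul (TensorProduct.map LinearMap.id ιp) ιq
        (g ⊗ₜ[ℤ] (⟨1, h1p⟩ : Dp)) (⟨1, h1q⟩ : Dq)
      rw [hΦ]
      erw [LinearMap.comp_apply, LinearMap.comp_apply, LinearMap.comp_apply, e]
      simp only [LinearMap.comp_apply, TensorProduct.map_tmul, LinearMap.id_apply,
        LinearEquiv.coe_coe, TensorProduct.assoc_tmul, LinearMap.mul'_apply,
        TensorProduct.comm_tmul]
      rw [hιp, hιq]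
      simp only [AddMonoidHom.coe_toIntLinearMap, AddSubgroup.coe_subtype, mul_one]
      rfl
    have hfloc : IsLocalizedModule (nonZeroDivisors ℤ) f := by
      rw [isLocalizedModule_iff_isBaseChange (nonZeroDivisors ℤ) ℚ f]
      exact TensorProduct.isBaseChange ℤ G ℚ
    have hfinj : Function.Injective f := by
      intro a b hab
      have h0 : f (a - b) = 0 := by rw [map_sub, hab, sub_self]
      obtain ⟨s, hs⟩ := (IsLocalizedModule.eq_zero_iff (nonZeroDivisors ℤ) f).mp h0
      have hs0 : (s : ℤ) ≠ 0 := nonZeroDivisors.coe_ne_zero s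
      have := (smul_eq_zero.mp hs).resolve_left hs0
      exact sub_eq_zero.mp this
    intro a b hab
    apply hfinj
    rw [← hΦC a, ← hΦC b, hab]
end

section
/- Let 𝔭 and 𝔮 be relatively prime supernatural numbers and let (G, G⁺) be a partially ordered abelian group. If (G ⊗ D_𝔭, (G ⊗ D_𝔭)⁺) and (G ⊗ D_𝔮, (G ⊗ D_𝔮)⁺) are torsion-free ordered abelian groups (i.e. they are generated by their positive cones), then G = G⁺ − G⁺, i.e. (G, G⁺) is an ordered abelian group. -/
open scoped TensorProduct

/-- The positive cone of `G ⊗ D` generated by elementary tensors of positive elements. -/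
noncomputable def tensorCone {G : Type*} [AddCommGroup G] (P : AddSubmonoid G) (D : AddSubgroup ℚ) :
    AddSubmonoid (G ⊗[ℤ] D) :=
  AddSubmonoid.closure {z | ∃ g ∈ P, ∃ d : D, 0 ≤ (d : ℚ) ∧ z = g ⊗ₜ[ℤ] d}

/-- The cone `C` is pointed: `C ∩ (−C) = {0}`. -/
def ConePointed {M : Type*} [AddCommGroup M] (C : AddSubmonoid M) : Prop :=
  ∀ x ∈ C, -x ∈ C → x = 0

/-- The cone `C` is generating: `M = C − C`. -/
def ConeGenerating {M : Type*} [AddCommGroup M] (C : AddSubmonoid M) : Prop :=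
  ∀ x : M, ∃ a ∈ C, ∃ b ∈ C, x = a - b

/-- The cone `C` is unperforated: `n • g ∈ C` for some `n ≥ 1` implies `g ∈ C`. -/
def ConeUnperforated {M : Type*} [AddCommGroup M] (C : AddSubmonoid M) : Prop :=
  ∀ (n : ℕ) (g : M), 0 < n → n • g ∈ C → g ∈ C

/-- The ordered group `(M, C)` has the Riesz interpolation property. -/
def ConeRIP {M : Type*} [AddCommGroup M] (C : AddSubmonoid M) : Prop :=
  ∀ g₀ g₁ h₀ h₁ : M, h₀ - g₀ ∈ C → h₁ - g₀ ∈ C → h₀ - g₁ ∈ C → h₁ - g₁ ∈ C →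
    ∃ a : M, a - g₀ ∈ C ∧ a - g₁ ∈ C ∧ h₀ - a ∈ C ∧ h₁ - a ∈ C

/-- `(M, C)` is a dimension group: an unperforated ordered abelian group with the Riesz
interpolation property. -/
def IsDimensionGroupCone {M : Type*} [AddCommGroup M] (C : AddSubmonoid M) : Prop :=
  ConePointed C ∧ ConeGenerating C ∧ ConeUnperforated C ∧ ConeRIP C


section Aux

open LocalizedModule

/-- All primes dividing `n` have nonzero exponent in `s`. -/
def SuppIn (s : Supernatural) (n : ℕ) : Prop := ∀ ℓ : ℕ, ℓ.Prime → ℓ ∣ n → s ℓ ≠ 0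

lemma suppIn_of_natDvd {s : Supernatural} {n : ℕ} (hn : n ≠ 0) (h : Supernatural.natDvd n s) :
    SuppIn s n := by
  intro ℓ hℓ hd hs
  have h1 : 0 < n.factorization ℓ := hℓ.factorization_pos_of_dvd hn hd
  have h2 := h ℓ hℓ
  rw [hs] at h2
  simp only [nonpos_iff_eq_zero, Nat.cast_eq_zero] at h2
  omega

lemma suppIn_mul {s : Supernatural} {m n : ℕ} (hm : SuppIn s m) (hn : SuppIn s n) :
    SuppIn s (m * n) := by
  intro ℓ hℓ hd
  rcases (Nat.Prime.dvd_mul hℓ).1 hd with h | h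
  exacts [hm ℓ hℓ h, hn ℓ hℓ h]

/-- The multiplicative set of positive integers all of whose prime factors occur in `s`. -/
def suppMonoid (s : Supernatural) : Submonoid ℤ where
  carrier := {m : ℤ | 0 < m ∧ ∀ ℓ : ℕ, ℓ.Prime → (ℓ : ℤ) ∣ m → s ℓ ≠ 0}
  one_mem' := by
    refine ⟨one_pos, fun ℓ hℓ hd => ?_⟩
    rw [show (1:ℤ) = ((1:ℕ):ℤ) by norm_num, Int.natCast_dvd_natCast] at hd
    exact absurd (Nat.dvd_one.mp hd) hℓ.ne_one
  mul_mem' := by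
    rintro x y ⟨hx0, hx⟩ ⟨hy0, hy⟩
    refine ⟨mul_pos hx0 hy0, fun ℓ hℓ hd => ?_⟩
    rcases (Nat.prime_iff_prime_int.mp hℓ).2.2 _ _ hd with h | h
    exacts [hx ℓ hℓ h, hy ℓ hℓ h]

lemma mem_suppMonoid {s : Supernatural} {m : ℤ} :
    m ∈ suppMonoid s ↔ 0 < m ∧ ∀ ℓ : ℕ, ℓ.Prime → (ℓ : ℤ) ∣ m → s ℓ ≠ 0 := Iff.rfl

lemma mk_eq_of {G : Type*} [AddCommGroup G] {S : Submonoid ℤ} {a b : ℤ} (s t : S) (m : G)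
    (h : (t : ℤ) * a = (s : ℤ) * b) :
    LocalizedModule.mk (a • m) s = LocalizedModule.mk (b • m) t := by
  rw [LocalizedModule.mk_eq]
  refine ⟨1, ?_⟩
  rw [one_smul, one_smul, Submonoid.smul_def, Submonoid.smul_def, smul_smul, smul_smul, h]

lemma mk_add_same {G : Type*} [AddCommGroup G] {S : Submonoid ℤ} (m m' : G) (s : S) :
    LocalizedModule.mk (m + m') s = LocalizedModule.mk m s + LocalizedModule.mk m' s := by
  rw [LocalizedModule.mk_add_mk, LocalizedModule.mk_eq]
  exact ⟨1, by simp [Submonoid.smul_def, smul_add, mul_smul]⟩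

lemma rat_mul_den (x : ℚ) : x * (x.den : ℚ) = (x.num : ℚ) :=
  (eq_div_iff (by exact_mod_cast x.den_nz)).mp (Rat.num_div_den x).symm

lemma rat_add_key (x y : ℚ) :
    ((x.den : ℤ) * y.den) * (x + y).num
      = ((x + y).den : ℤ) * ((y.den : ℤ) * x.num + (x.den : ℤ) * y.num) := by
  have hx := rat_mul_den x
  have hy := rat_mul_den y
  have hxy := rat_mul_den (x + y)
  have key : (((x.den : ℤ) * y.den) * (x + y).num : ℤ) =
      (((x + y).den : ℤ) * ((y.den : ℤ) * x.num + (x.den : ℤ) * y.num) : ℤ) := by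
    have : ((((x.den : ℤ) * y.den) * (x + y).num : ℤ) : ℚ) =
        ((((x + y).den : ℤ) * ((y.den : ℤ) * x.num + (x.den : ℤ) * y.num) : ℤ) : ℚ) := by
      push_cast
      rw [← hx, ← hy, ← hxy]
      ring
    exact_mod_cast this
  exact key

lemma rat_smul_key (c : ℤ) (x : ℚ) :
    (x.den : ℤ) * ((c : ℚ) * x).num = (((c : ℚ) * x).den : ℤ) * (c * x.num) := by
  have hx := rat_mul_den x
  have hcx := rat_mul_den ((c : ℚ) * x)
  have : (((x.den : ℤ) * ((c : ℚ) * x).num : ℤ) : ℚ) =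
      (((((c : ℚ) * x).den : ℤ) * (c * x.num) : ℤ) : ℚ) := by
    push_cast
    rw [← hx, ← hcx]
    ring
  exact_mod_cast this

lemma int_smul_mk {S : Submonoid ℤ} {G : Type*} [AddCommGroup G] (c : ℤ) (m : G) (s : S) :
    c • (LocalizedModule.mk m s : LocalizedModule S G) = LocalizedModule.mk (c • m) s := by
  induction c using Int.induction_on with
  | zero => rw [zero_smul, zero_smul, LocalizedModule.zero_mk]
  | succ k ih => rw [add_smul, add_smul, one_smul, one_smul, ih, mk_add_same]
  | pred k ih =>
      rw [sub_smul, sub_smul, one_smul, one_smul, ih]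
      have : LocalizedModule.mk ((-k : ℤ) • m - m) s + LocalizedModule.mk m s
          = LocalizedModule.mk ((-k : ℤ) • m) s := by
        rw [← mk_add_same, sub_add_cancel]
      rw [← this]
      abel

lemma ker_lemma {s : Supernatural} {D : AddSubgroup ℚ} (hD : IsDGroup s D)
    {G : Type*} [AddCommGroup G] (h1 : (1 : ℚ) ∈ D) (h : G)
    (hz : h ⊗ₜ[ℤ] (⟨1, h1⟩ : D) = (0 : G ⊗[ℤ] D)) :
    ∃ m : ℕ, 0 < m ∧ SuppIn s m ∧ (m : ℤ) • h = 0 := by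
  set S := suppMonoid s with hS
  have hden : ∀ d : D, (((d : ℚ).den : ℤ)) ∈ S := by
    intro d
    refine ⟨by exact_mod_cast (d : ℚ).pos, fun ℓ hℓ hdvd => ?_⟩
    have hdd : ℓ ∣ (d : ℚ).den := by exact_mod_cast hdvd
    exact suppIn_of_natDvd (d : ℚ).den_nz ((hD _).1 d.2) ℓ hℓ hdd
  let β : G → D → LocalizedModule S G := fun g d =>
    LocalizedModule.mk ((d : ℚ).num • g) ⟨((d : ℚ).den : ℤ), hden d⟩
  have haddl : ∀ g g' d, β (g + g') d = β g d + β g' d := by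
    intro g g' d
    show LocalizedModule.mk _ _ = _
    rw [smul_add]
    exact mk_add_same _ _ _
  have haddr : ∀ g d e, β g (d + e) = β g d + β g e := by
    intro g d e
    show LocalizedModule.mk _ _ =
      LocalizedModule.mk _ _ + LocalizedModule.mk _ _
    rw [LocalizedModule.mk_add_mk]
    have hco : ((d + e : D) : ℚ) = (d : ℚ) + (e : ℚ) := rfl
    have hnum : (⟨((e:ℚ).den : ℤ), hden e⟩ : S) • ((d:ℚ).num • g)
        + (⟨((d:ℚ).den : ℤ), hden d⟩ : S) • ((e:ℚ).num • g)
        = (((e:ℚ).den : ℤ) * (d:ℚ).num + ((d:ℚ).den : ℤ) * (e:ℚ).num) • g := by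
      rw [Submonoid.smul_def, Submonoid.smul_def, smul_smul, smul_smul, add_smul]
    rw [hnum]
    simp only [hco]
    exact mk_eq_of _ _ g (rat_add_key (d:ℚ) (e:ℚ))
  have hsmull : ∀ (c : ℤ) g d, β (c • g) d = c • β g d := by
    intro c g d
    show LocalizedModule.mk _ _ = c • LocalizedModule.mk _ _
    rw [int_smul_mk, smul_smul, smul_smul, mul_comm]
  have hsmulr : ∀ (c : ℤ) g d, β g (c • d) = c • β g d := by
    intro c g d
    show LocalizedModule.mk _ _ = c • LocalizedModule.mk _ _
    rw [int_smul_mk, smul_smul]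
    have hco : ((c • d : D) : ℚ) = (c : ℚ) * (d : ℚ) := by
      push_cast
      rw [zsmul_eq_mul]
    simp only [hco]
    exact mk_eq_of _ _ g (rat_smul_key c (d:ℚ))
  let bil : G →ₗ[ℤ] D →ₗ[ℤ] LocalizedModule S G :=
    LinearMap.mk₂ ℤ β haddl (fun c g d => hsmull c g d) haddr (fun c g d => hsmulr c g d)
  have hφ := congrArg (TensorProduct.lift bil) hz
  rw [map_zero, TensorProduct.lift.tmul] at hφ
  have hβ : β h ⟨1, h1⟩ = 0 := hφ
  have hone : ((⟨1, h1⟩ : D) : ℚ) = 1 := rfl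
  rw [show β h ⟨1, h1⟩ =
      LocalizedModule.mk (((⟨1, h1⟩ : D) : ℚ).num • h) ⟨(((⟨1, h1⟩ : D) : ℚ).den : ℤ), hden _⟩
      from rfl] at hβ
  rw [← LocalizedModule.zero_mk (1 : S), LocalizedModule.mk_eq] at hβ
  obtain ⟨u, hu⟩ := hβ
  rw [Submonoid.smul_def, Submonoid.smul_def, Submonoid.smul_def, Submonoid.smul_def,
    smul_zero, smul_zero, hone] at hu
  simp only [Rat.num_one, one_smul, OneMemClass.coe_one] at hu
  obtain ⟨hu0, husupp⟩ := u.2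
  refine ⟨(u : ℤ).toNat, by omega, fun ℓ hℓ hd => ?_, ?_⟩
  · refine husupp ℓ hℓ ?_
    have := Int.natCast_dvd_natCast.mpr hd
    rwa [Int.toNat_of_nonneg hu0.le] at this
  · rw [Int.toNat_of_nonneg hu0.le]
    exact hu

set_option maxHeartbeats 1000000 in
lemma cone_clear {s : Supernatural} {D : AddSubgroup ℚ} (hD : IsDGroup s D) (h1 : (1 : ℚ) ∈ D)
    {G : Type*} [AddCommGroup G] (P : AddSubmonoid G) {x : G ⊗[ℤ] D} (hx : x ∈ tensorCone P D) :
    ∃ n : ℕ, 0 < n ∧ SuppIn s n ∧ ∃ a ∈ P, (n : ℤ) • x = a ⊗ₜ[ℤ] (⟨1, h1⟩ : D) := by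
  refine AddSubmonoid.closure_induction ?_ ?_ ?_ hx
  · rintro z ⟨g, hg, d, hd0, rfl⟩
    refine ⟨(d : ℚ).den, (d : ℚ).pos, suppIn_of_natDvd (d : ℚ).den_nz ((hD _).1 d.2), ?_⟩
    refine ⟨(d : ℚ).num.toNat • g, nsmul_mem hg _, ?_⟩
    have hnum : (0 : ℤ) ≤ (d : ℚ).num := Rat.num_nonneg.mpr hd0
    have hsmuld : (((d : ℚ).den : ℤ)) • d = (d : ℚ).num • (⟨1, h1⟩ : D) := by
      ext
      push_cast
      rw [zsmul_eq_mul, zsmul_eq_mul, mul_one, mul_comm]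
      exact rat_mul_den (d : ℚ)
    calc (((d : ℚ).den : ℕ) : ℤ) • (g ⊗ₜ[ℤ] d)
        = g ⊗ₜ[ℤ] ((((d : ℚ).den : ℕ) : ℤ) • d) := (TensorProduct.tmul_smul _ _ _).symm
      _ = g ⊗ₜ[ℤ] ((d : ℚ).num • (⟨1, h1⟩ : D)) := by rw [hsmuld]
      _ = (d : ℚ).num • (g ⊗ₜ[ℤ] (⟨1, h1⟩ : D)) := TensorProduct.tmul_smul _ _ _
      _ = (((d : ℚ).num.toNat : ℕ) : ℤ) • (g ⊗ₜ[ℤ] (⟨1, h1⟩ : D)) := by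
            rw [Int.toNat_of_nonneg hnum]
      _ = ((d : ℚ).num.toNat • g) ⊗ₜ[ℤ] (⟨1, h1⟩ : D) := by
            rw [TensorProduct.smul_tmul', natCast_zsmul]
  · exact ⟨1, one_pos, fun ℓ hℓ hd _ => absurd (Nat.dvd_one.mp hd) hℓ.ne_one,
      0, P.zero_mem, by rw [smul_zero, TensorProduct.zero_tmul]⟩
  · rintro x y _ _ ⟨nx, hnx0, hnxs, ax, hax, hxe⟩ ⟨ny, hny0, hnys, ay, hay, hye⟩
    refine ⟨nx * ny, Nat.mul_pos hnx0 hny0, suppIn_mul hnxs hnys,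
      ny • ax + nx • ay, P.add_mem (nsmul_mem hax _) (nsmul_mem hay _), ?_⟩
    have : ((nx * ny : ℕ) : ℤ) • (x + y)
        = (ny : ℤ) • ((nx : ℤ) • x) + (nx : ℤ) • ((ny : ℤ) • y) := by
      rw [smul_smul, smul_smul, smul_add]
      push_cast
      rw [mul_comm (ny : ℤ) (nx : ℤ)]
    rw [this, hxe, hye, TensorProduct.smul_tmul', TensorProduct.smul_tmul',
      ← TensorProduct.add_tmul]
    congr 2 <;> rw [natCast_zsmul]

lemma side_lemma {s : Supernatural} {D : AddSubgroup ℚ} (hD : IsDGroup s D)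
    {G : Type*} [AddCommGroup G] (P : AddSubmonoid G)
    (hgen : ConeGenerating (tensorCone P D)) (g : G) :
    ∃ N : ℕ, 0 < N ∧ SuppIn s N ∧ ∃ a ∈ P, ∃ b ∈ P, (N : ℤ) • g = a - b := by
  have h1 : (1 : ℚ) ∈ D := by
    refine (hD 1).2 fun ℓ hℓ => ?_
    norm_num [Supernatural.memD, Supernatural.natDvd]
  obtain ⟨A, hA, B, hB, hAB⟩ := hgen (g ⊗ₜ[ℤ] (⟨1, h1⟩ : D))
  obtain ⟨nA, hnA0, hnAs, a', ha', hAe⟩ := cone_clear hD h1 P hA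
  obtain ⟨nB, hnB0, hnBs, b', hb', hBe⟩ := cone_clear hD h1 P hB
  set aa := nB • a' with haa
  set bb := nA • b' with hbb
  have haaP : aa ∈ P := nsmul_mem ha' _
  have hbbP : bb ∈ P := nsmul_mem hb' _
  have hker : (((nA * nB : ℕ) : ℤ) • g - aa + bb) ⊗ₜ[ℤ] (⟨1, h1⟩ : D) = 0 := by
    have e1 : ((nA * nB : ℕ) : ℤ) • (A - B)
        = (nB : ℤ) • ((nA : ℤ) • A) - (nA : ℤ) • ((nB : ℤ) • B) := by
      rw [smul_smul, smul_smul, smul_sub]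
      push_cast
      rw [mul_comm (nB : ℤ) (nA : ℤ)]
    have e2 : ((nB : ℤ) • a') = aa := by rw [haa, natCast_zsmul]
    have e3 : ((nA : ℤ) • b') = bb := by rw [hbb, natCast_zsmul]
    rw [TensorProduct.add_tmul, TensorProduct.sub_tmul, ← TensorProduct.smul_tmul', hAB,
      e1, hAe, hBe, TensorProduct.smul_tmul', TensorProduct.smul_tmul', e2, e3]
    abel
  obtain ⟨m, hm0, hms, hm⟩ := ker_lemma hD h1 _ hker
  refine ⟨m * (nA * nB), Nat.mul_pos hm0 (Nat.mul_pos hnA0 hnB0),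
    suppIn_mul hms (suppIn_mul hnAs hnBs),
    m • aa, nsmul_mem haaP _, m • bb, nsmul_mem hbbP _, ?_⟩
  have e4 : ((m * (nA * nB) : ℕ) : ℤ) • g = (m : ℤ) • (((nA * nB : ℕ) : ℤ) • g) := by
    rw [smul_smul]
    norm_cast
  have hm' : (m : ℤ) • (((nA * nB : ℕ) : ℤ) • g) - (m : ℤ) • aa + (m : ℤ) • bb = 0 := by
    rw [← smul_sub, ← smul_add]
    exact hm
  have h6 : (m : ℤ) • (((nA * nB : ℕ) : ℤ) • g) - (m : ℤ) • aa = -((m : ℤ) • bb) := by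
    rwa [add_eq_zero_iff_eq_neg] at hm'
  have h7 : (m : ℤ) • (((nA * nB : ℕ) : ℤ) • g) = (m : ℤ) • aa - (m : ℤ) • bb := by
    rw [sub_eq_iff_eq_add] at h6
    rw [h6]
    abel
  rw [e4, h7, natCast_zsmul, natCast_zsmul]

lemma diff_zsmul {G : Type*} [AddCommGroup G] (P : AddSubmonoid G) {x a b : G}
    (ha : a ∈ P) (hb : b ∈ P) (hx : x = a - b) (c : ℤ) :
    ∃ a' ∈ P, ∃ b' ∈ P, c • x = a' - b' := by
  rcases le_or_gt 0 c with h | h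
  · refine ⟨c.toNat • a, nsmul_mem ha _, c.toNat • b, nsmul_mem hb _, ?_⟩
    rw [hx, smul_sub, ← natCast_zsmul a c.toNat, ← natCast_zsmul b c.toNat,
      Int.toNat_of_nonneg h]
  · refine ⟨(-c).toNat • b, nsmul_mem hb _, (-c).toNat • a, nsmul_mem ha _, ?_⟩
    rw [hx, smul_sub, ← natCast_zsmul a (-c).toNat, ← natCast_zsmul b (-c).toNat,
      Int.toNat_of_nonneg (by omega : (0:ℤ) ≤ -c)]
    rw [neg_smul, neg_smul]
    abel

end Aux

/-- if `(G, G⁺)` is a partially ordered abelian group such that `(G ⊗ D_𝔭)` and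
`(G ⊗ D_𝔮)` (with the tensor cones) are torsion-free ordered abelian groups, for relatively
prime supernatural numbers `𝔭` and `𝔮`, then `G = G⁺ − G⁺`. -/
theorem ordered_of_tensor_ordered
    (𝔭 𝔮 : Supernatural) (hpq : Supernatural.Coprime 𝔭 𝔮)
    (Dp Dq : AddSubgroup ℚ) (hDp : IsDGroup 𝔭 Dp) (hDq : IsDGroup 𝔮 Dq)
    (G : Type*) [AddCommGroup G] (P : AddSubmonoid G)
    (hPpointed : ConePointed P)
    (htfp : NoZeroSMulDivisors ℤ (G ⊗[ℤ] Dp)) (htfq : NoZeroSMulDivisors ℤ (G ⊗[ℤ] Dq))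
    (hp1 : ConePointed (tensorCone P Dp)) (hq1 : ConePointed (tensorCone P Dq))
    (hp2 : ConeGenerating (tensorCone P Dp)) (hq2 : ConeGenerating (tensorCone P Dq)) :
    ConeGenerating P := by
  intro g
  obtain ⟨Np, hNp0, hNps, a, ha, b, hb, hNp⟩ := side_lemma hDp P hp2 g
  obtain ⟨Nq, hNq0, hNqs, c, hc, d, hd, hNq⟩ := side_lemma hDq P hq2 g
  have hcop : Nat.gcd Np Nq = 1 := by
    by_contra hne
    obtain ⟨ℓ, hℓ, hdvd⟩ := Nat.exists_prime_and_dvd hne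
    have h1 := hNps ℓ hℓ (hdvd.trans (Nat.gcd_dvd_left _ _))
    have h2 := hNqs ℓ hℓ (hdvd.trans (Nat.gcd_dvd_right _ _))
    rcases hpq ℓ hℓ with h | h
    exacts [h1 h, h2 h]
  set u := Nat.gcdA Np Nq
  set v := Nat.gcdB Np Nq
  have hbez : (1 : ℤ) = Np * u + Nq * v := by
    have := Nat.gcd_eq_gcd_ab Np Nq
    rwa [hcop, Nat.cast_one] at this
  have hg : g = u • ((Np : ℤ) • g) + v • ((Nq : ℤ) • g) := by
    rw [smul_smul, smul_smul, ← add_smul]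
    rw [show u * (Np : ℤ) + v * (Nq : ℤ) = (Np : ℤ) * u + (Nq : ℤ) * v by ring, ← hbez, one_smul]
  obtain ⟨a1, ha1, b1, hb1, he1⟩ := diff_zsmul P ha hb hNp u
  obtain ⟨a2, ha2, b2, hb2, he2⟩ := diff_zsmul P hc hd hNq v
  refine ⟨a1 + a2, P.add_mem ha1 ha2, b1 + b2, P.add_mem hb1 hb2, ?_⟩
  rw [hg, he1, he2]
  abel
end

section
/- If (G, G⁺) is an unperforated ordered abelian group and 𝔫 any supernatural number, then (G ⊗ D_𝔫, (G ⊗ D_𝔫)⁺) is an unperforated ordered abelian group. -/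
open scoped TensorProduct

/-! ### Auxiliary lemmas -/

section Aux

lemma Supernatural.natDvd_of_dvd (𝔫 : Supernatural) {q r : ℕ} (hq : 0 < q)
    (h : Supernatural.natDvd q 𝔫) (hr0 : 0 < r) (hr : r ∣ q) : Supernatural.natDvd r 𝔫 := by
  intro p hp
  refine le_trans ?_ (h p hp)
  exact_mod_cast (Nat.factorization_le_iff_dvd hr0.ne' hq.ne').mpr hr p

lemma Supernatural.natDvd_lcm (𝔫 : Supernatural) {q r : ℕ} (hq : 0 < q) (hr : 0 < r)
    (h : Supernatural.natDvd q 𝔫) (h' : Supernatural.natDvd r 𝔫) :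
    Supernatural.natDvd (Nat.lcm q r) 𝔫 := by
  intro p hp
  rw [Nat.factorization_lcm hq.ne' hr.ne']
  have : ((q.factorization ⊔ r.factorization) p : ℕ∞)
      = max (q.factorization p : ℕ∞) (r.factorization p : ℕ∞) := by
    simp only [Finsupp.sup_apply]
    exact (Nat.mono_cast.map_max (a := q.factorization p) (b := r.factorization p))
  rw [this]
  exact max_le (h p hp) (h' p hp)

lemma Supernatural.natDvd_one' (𝔫 : Supernatural) : Supernatural.natDvd 1 𝔫 := by
  intro p hp; simp

/-- `1/q ∈ D` when `q` divides `𝔫`. -/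
lemma uMem (𝔫 : Supernatural) (D : AddSubgroup ℚ) (hD : IsDGroup 𝔫 D) {q : ℕ}
    (hq : 0 < q) (h : Supernatural.natDvd q 𝔫) : ((q : ℚ)⁻¹) ∈ D := by
  rw [hD]
  unfold Supernatural.memD
  rwa [Rat.inv_natCast_den_of_pos hq]

/-- The canonical element `1/q` of `D`. -/
noncomputable def uElt (𝔫 : Supernatural) (D : AddSubgroup ℚ) (hD : IsDGroup 𝔫 D) {q : ℕ}
    (hq : 0 < q) (h : Supernatural.natDvd q 𝔫) : D :=
  ⟨(q : ℚ)⁻¹, uMem 𝔫 D hD hq h⟩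

section Inj
variable {G : Type*} [AddCommGroup G] (D : AddSubgroup ℚ)

/-- Inclusion of `D` into `ℚ` as a `ℤ`-linear map. -/
def DIncl : D →ₗ[ℤ] ℚ where
  toFun := fun x => (x : ℚ)
  map_add' := fun x y => rfl
  map_smul' := fun n x => by simp

lemma one_tmul_eq_zero (htf : ∀ (n : ℤ), n ≠ 0 → ∀ g : G, n • g = 0 → g = 0)
    {g : G} (h : (1 : ℚ) ⊗ₜ[ℤ] g = 0) : g = 0 := by
  set f := TensorProduct.mk ℤ ℚ G 1 with hf
  haveI : IsLocalizedModule (nonZeroDivisors ℤ) f :=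
    (isLocalizedModule_iff_isBaseChange (nonZeroDivisors ℤ) ℚ f).mpr
      (TensorProduct.isBaseChange ℤ G ℚ)
  have hz : f g = 0 := h
  obtain ⟨s, hs⟩ := (IsLocalizedModule.eq_zero_iff (nonZeroDivisors ℤ) f).mp hz
  exact htf s (nonZeroDivisors.coe_ne_zero s) g hs

lemma tmul_eq_zero (htf : ∀ (n : ℤ), n ≠ 0 → ∀ g : G, n • g = 0 → g = 0)
    {g : G} {d : D} (hd : (d : ℚ) ≠ 0) (h : g ⊗ₜ[ℤ] d = 0) : g = 0 := by
  set ψ : G ⊗[ℤ] D →ₗ[ℤ] ℚ ⊗[ℤ] G :=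
    (TensorProduct.comm ℤ G ℚ).toLinearMap.comp
      (TensorProduct.map LinearMap.id (DIncl D)) with hψ
  have h1 : (d : ℚ) ⊗ₜ[ℤ] g = 0 := by
    have := congrArg ψ h
    have h' : TensorProduct.comm ℤ G ℚ (TensorProduct.map LinearMap.id (DIncl D) (g ⊗ₜ[ℤ] d)) = 0 := by
      rw [h, map_zero, map_zero]
    simpa [DIncl] using h'
  have h2 : ((d : ℚ).num • (1:ℚ)) ⊗ₜ[ℤ] g = 0 := by
    have hden : ((d : ℚ).num • (1:ℚ)) = ((d : ℚ).den : ℤ) • (d : ℚ) := by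
      rw [zsmul_eq_mul, zsmul_eq_mul, mul_one]
      push_cast
      rw [mul_comm]
      exact (Rat.mul_den_eq_num _).symm
    rw [hden, ← TensorProduct.smul_tmul', h1, smul_zero]
  rw [TensorProduct.smul_tmul] at h2
  have h3 : (d : ℚ).num • g = 0 := one_tmul_eq_zero htf h2
  exact htf _ (Rat.num_ne_zero.mpr hd) g h3

end Inj

section Struct

variable (𝔫 : Supernatural) (D : AddSubgroup ℚ) (hD : IsDGroup 𝔫 D)
variable {G : Type*} [AddCommGroup G]

/-- Common denominator lemma. -/
lemma common_denom {q q' : ℕ} (hq : 0 < q) (hq' : 0 < q')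
    (hd : Supernatural.natDvd q 𝔫) (hd' : Supernatural.natDvd q' 𝔫) :
    ∃ (Q : ℕ) (hQ : 0 < Q) (hQd : Supernatural.natDvd Q 𝔫) (c c' : ℕ),
      uElt 𝔫 D hD hq hd = c • uElt 𝔫 D hD hQ hQd ∧
      uElt 𝔫 D hD hq' hd' = c' • uElt 𝔫 D hD hQ hQd := by
  refine ⟨Nat.lcm q q', Nat.pos_of_ne_zero (Nat.lcm_ne_zero hq.ne' hq'.ne'),
    Supernatural.natDvd_lcm 𝔫 hq hq' hd hd', Nat.lcm q q' / q, Nat.lcm q q' / q', ?_, ?_⟩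
  · apply Subtype.ext
    have hdvd : q ∣ Nat.lcm q q' := Nat.dvd_lcm_left q q'
    have hmul : q * (Nat.lcm q q' / q) = Nat.lcm q q' := Nat.mul_div_cancel' hdvd
    show ((q : ℚ)⁻¹) = (Nat.lcm q q' / q : ℕ) • ((Nat.lcm q q' : ℚ))⁻¹
    rw [nsmul_eq_mul]
    have hL : (Nat.lcm q q' : ℚ) ≠ 0 := by
      exact_mod_cast (Nat.lcm_ne_zero hq.ne' hq'.ne')
    field_simp
    exact_mod_cast hmul.symm
  · apply Subtype.ext
    have hdvd : q' ∣ Nat.lcm q q' := Nat.dvd_lcm_right q q'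
    have hmul : q' * (Nat.lcm q q' / q') = Nat.lcm q q' := Nat.mul_div_cancel' hdvd
    show ((q' : ℚ)⁻¹) = (Nat.lcm q q' / q' : ℕ) • ((Nat.lcm q q' : ℚ))⁻¹
    rw [nsmul_eq_mul]
    have hL : (Nat.lcm q q' : ℚ) ≠ 0 := by
      exact_mod_cast (Nat.lcm_ne_zero hq.ne' hq'.ne')
    field_simp
    exact_mod_cast hmul.symm

lemma nsmul_tmul' (n : ℕ) (a : G) (u : D) :
    n • (a ⊗ₜ[ℤ] u) = (n • a) ⊗ₜ[ℤ] u := by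
  rw [← natCast_zsmul (a ⊗ₜ[ℤ] u) n, TensorProduct.smul_tmul', natCast_zsmul]

lemma tmul_nsmul_elt (g : G) (c : ℕ) (u : D) :
    g ⊗ₜ[ℤ] (c • u) = (c • g) ⊗ₜ[ℤ] u := by
  rw [← natCast_zsmul u c, ← natCast_zsmul g c, TensorProduct.tmul_smul,
    TensorProduct.smul_tmul']

/-- Every element of `G ⊗ D` is an elementary tensor with denominator dividing `𝔫`. -/
lemma tensor_repr (x : G ⊗[ℤ] D) :
    ∃ (g : G) (q : ℕ) (hq : 0 < q) (hdq : Supernatural.natDvd q 𝔫),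
      x = g ⊗ₜ[ℤ] uElt 𝔫 D hD hq hdq := by
  induction x with
  | zero =>
      exact ⟨0, 1, one_pos, Supernatural.natDvd_one' 𝔫, by simp⟩
  | tmul g d =>
      refine ⟨(d : ℚ).num • g, (d : ℚ).den, (d : ℚ).pos, ?_, ?_⟩
      · exact (hD (d : ℚ)).mp d.2
      · have hd : (d : D) = (d : ℚ).num • uElt 𝔫 D hD (d : ℚ).pos ((hD (d : ℚ)).mp d.2) := by
          apply Subtype.ext
          show (d : ℚ) = (d : ℚ).num • ((d : ℚ).den : ℚ)⁻¹
          rw [zsmul_eq_mul, ← div_eq_mul_inv, Rat.num_div_den]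
        conv_lhs => rw [hd]
        rw [TensorProduct.tmul_smul, TensorProduct.smul_tmul']
  | add x y hx hy =>
      obtain ⟨g, q, hq, hdq, rfl⟩ := hx
      obtain ⟨g', q', hq', hdq', rfl⟩ := hy
      obtain ⟨Q, hQ, hQd, c, c', h1, h2⟩ := common_denom 𝔫 D hD hq hq' hdq hdq'
      refine ⟨c • g + c' • g', Q, hQ, hQd, ?_⟩
      rw [h1, h2, tmul_nsmul_elt, tmul_nsmul_elt, TensorProduct.add_tmul]

/-- Characterization of the cone. -/
lemma cone_repr {P : AddSubmonoid G} {x : G ⊗[ℤ] D} (hx : x ∈ tensorCone P D) :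
    ∃ (g : G) (_ : g ∈ P) (q : ℕ) (hq : 0 < q) (hdq : Supernatural.natDvd q 𝔫),
      x = g ⊗ₜ[ℤ] uElt 𝔫 D hD hq hdq := by
  induction hx using AddSubmonoid.closure_induction with
  | mem z hz =>
      obtain ⟨g, hg, d, hd0, rfl⟩ := hz
      refine ⟨(d : ℚ).num.toNat • g, AddSubmonoid.nsmul_mem P hg _, (d : ℚ).den, (d : ℚ).pos,
        (hD (d : ℚ)).mp d.2, ?_⟩
      have hd : (d : D) = (d : ℚ).num.toNat • uElt 𝔫 D hD (d : ℚ).pos ((hD (d : ℚ)).mp d.2) := by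
        apply Subtype.ext
        show (d : ℚ) = (d : ℚ).num.toNat • ((d : ℚ).den : ℚ)⁻¹
        rw [nsmul_eq_mul]
        have : (((d : ℚ).num.toNat : ℤ) : ℚ) = ((d : ℚ).num : ℚ) := by
          exact_mod_cast congrArg (fun n : ℤ => (n : ℚ)) (Int.toNat_of_nonneg (Rat.num_nonneg.mpr hd0))
        push_cast at this ⊢
        rw [this, ← div_eq_mul_inv, Rat.num_div_den]
      conv_lhs => rw [hd]
      rw [tmul_nsmul_elt]
  | zero =>
      exact ⟨0, P.zero_mem, 1, one_pos, Supernatural.natDvd_one' 𝔫, by simp⟩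
  | add x y hx hy ihx ihy =>
      obtain ⟨g, hg, q, hq, hdq, rfl⟩ := ihx
      obtain ⟨g', hg', q', hq', hdq', rfl⟩ := ihy
      obtain ⟨Q, hQ, hQd, c, c', h1, h2⟩ := common_denom 𝔫 D hD hq hq' hdq hdq'
      refine ⟨c • g + c' • g', AddSubmonoid.add_mem P (AddSubmonoid.nsmul_mem P hg _)
        (AddSubmonoid.nsmul_mem P hg' _), Q, hQ, hQd, ?_⟩
      rw [h1, h2, tmul_nsmul_elt, tmul_nsmul_elt, TensorProduct.add_tmul]

lemma mem_cone_of {P : AddSubmonoid G} {g : G} (hg : g ∈ P) {q : ℕ} (hq : 0 < q)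
    (hdq : Supernatural.natDvd q 𝔫) :
    g ⊗ₜ[ℤ] uElt 𝔫 D hD hq hdq ∈ tensorCone P D := by
  apply AddSubmonoid.subset_closure
  refine ⟨g, hg, uElt 𝔫 D hD hq hdq, ?_, rfl⟩
  show (0 : ℚ) ≤ ((q : ℚ))⁻¹
  positivity

end Struct

end Aux

/-- if `(G, G⁺)` is an unperforated ordered abelian group and `𝔫` is any
supernatural number, then `(G ⊗ D_𝔫)` with the tensor cone is again an unperforated ordered
abelian group. -/
theorem tensor_unperforated_ordered
    (𝔫 : Supernatural) (D : AddSubgroup ℚ) (hD : IsDGroup 𝔫 D)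
    (G : Type*) [AddCommGroup G] (P : AddSubmonoid G)
    (hPpointed : ConePointed P) (hPgen : ConeGenerating P)
    (hPunperf : ConeUnperforated P) :
    ConePointed (tensorCone P D) ∧ ConeGenerating (tensorCone P D) ∧
      ConeUnperforated (tensorCone P D) := by
  -- torsion-freeness of G
  have htf : ∀ (n : ℤ), n ≠ 0 → ∀ g : G, n • g = 0 → g = 0 := by
    intro n hn g hg
    have key : ∀ (m : ℕ) (g : G), 0 < m → m • g = 0 → g = 0 := by
      intro m g hm hmg
      have h1 : g ∈ P := hPunperf m g hm (hmg ▸ P.zero_mem)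
      have h2 : -g ∈ P := by
        refine hPunperf m (-g) hm ?_
        have : m • (-g) = 0 := by rw [smul_neg, hmg, neg_zero]
        exact this ▸ P.zero_mem
      exact hPpointed g h1 h2
    rcases lt_trichotomy n 0 with hlt | heq | hgt
    · refine key n.natAbs g (by omega) ?_
      have : (n.natAbs : ℤ) • g = -(n • g) := by
        rw [← neg_zsmul]; congr 1; omega
      rw [← natCast_zsmul, this, hg, neg_zero]
    · exact absurd heq hn
    · refine key n.toNat g (by omega) ?_
      rw [← natCast_zsmul, Int.toNat_of_nonneg hgt.le, hg]
  have hune : ∀ {q : ℕ} (hq : 0 < q) (hdq : Supernatural.natDvd q 𝔫),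
      ((uElt 𝔫 D hD hq hdq : D) : ℚ) ≠ 0 := by
    intro q hq hdq
    show ((q : ℚ))⁻¹ ≠ 0
    positivity
  refine ⟨?_, ?_, ?_⟩
  · -- Pointed
    intro x hx hnx
    obtain ⟨g, hg, q, hq, hdq, hxeq⟩ := cone_repr 𝔫 D hD hx
    obtain ⟨h, hh, q', hq', hdq', hxeq'⟩ := cone_repr 𝔫 D hD hnx
    obtain ⟨Q, hQ, hQd, c, c', h1, h2⟩ := common_denom 𝔫 D hD hq hq' hdq hdq'
    have hx2 : x = (c • g) ⊗ₜ[ℤ] uElt 𝔫 D hD hQ hQd := by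
      rw [hxeq, h1, tmul_nsmul_elt]
    have hnx2 : -x = (c' • h) ⊗ₜ[ℤ] uElt 𝔫 D hD hQ hQd := by
      rw [hxeq', h2, tmul_nsmul_elt]
    have hsum : (c • g + c' • h) ⊗ₜ[ℤ] uElt 𝔫 D hD hQ hQd = 0 := by
      rw [TensorProduct.add_tmul, ← hx2, ← hnx2, add_neg_cancel]
    have hzero : c • g + c' • h = 0 := tmul_eq_zero D htf (hune hQ hQd) hsum
    have hcg : c • g = 0 := by
      refine hPpointed (c • g) (AddSubmonoid.nsmul_mem P hg _) ?_
      have h3 : -(c • g) = c' • h := (eq_neg_of_add_eq_zero_right hzero).symm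
      exact h3 ▸ AddSubmonoid.nsmul_mem P hh c'
    rw [hx2, hcg, TensorProduct.zero_tmul]
  · -- Generating
    intro x
    obtain ⟨g, q, hq, hdq, rfl⟩ := tensor_repr 𝔫 D hD x
    obtain ⟨a, ha, b, hb, hab⟩ := hPgen g
    refine ⟨a ⊗ₜ[ℤ] uElt 𝔫 D hD hq hdq, mem_cone_of 𝔫 D hD ha hq hdq,
      b ⊗ₜ[ℤ] uElt 𝔫 D hD hq hdq, mem_cone_of 𝔫 D hD hb hq hdq, ?_⟩
    rw [hab, TensorProduct.sub_tmul]
  · -- Unperforated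
    intro n x hn hnx
    obtain ⟨g, q, hq, hdq, rfl⟩ := tensor_repr 𝔫 D hD x
    obtain ⟨h, hh, q', hq', hdq', hxeq'⟩ := cone_repr 𝔫 D hD hnx
    obtain ⟨Q, hQ, hQd, c, c', h1, h2⟩ := common_denom 𝔫 D hD hq hq' hdq hdq'
    have hx2 : n • (g ⊗ₜ[ℤ] uElt 𝔫 D hD hq hdq)
        = (n • (c • g)) ⊗ₜ[ℤ] uElt 𝔫 D hD hQ hQd := by
      rw [h1, tmul_nsmul_elt, nsmul_tmul']
    have hnx2 : n • (g ⊗ₜ[ℤ] uElt 𝔫 D hD hq hdq)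
        = (c' • h) ⊗ₜ[ℤ] uElt 𝔫 D hD hQ hQd := by
      rw [hxeq', h2, tmul_nsmul_elt]
    have hdiff : (n • (c • g) - c' • h) ⊗ₜ[ℤ] uElt 𝔫 D hD hQ hQd = 0 := by
      rw [TensorProduct.sub_tmul, ← hx2, ← hnx2, sub_self]
    have hzero : n • (c • g) - c' • h = 0 := tmul_eq_zero D htf (hune hQ hQd) hdiff
    have hmem : n • (c • g) ∈ P := by
      have h3 : n • (c • g) = c' • h := sub_eq_zero.mp hzero
      exact h3 ▸ AddSubmonoid.nsmul_mem P hh c'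
    have hcg : c • g ∈ P := hPunperf n (c • g) hn hmem
    have : g ⊗ₜ[ℤ] uElt 𝔫 D hD hq hdq = (c • g) ⊗ₜ[ℤ] uElt 𝔫 D hD hQ hQd := by
      rw [h1, tmul_nsmul_elt]
    rw [this]
    exact mem_cone_of 𝔫 D hD hcg hQ hQd
end

section
/- Let 𝔭, 𝔮 be relatively prime supernatural numbers and (G, G⁺) an unperforated partially ordered abelian group such that G ⊗ D_𝔭 and G ⊗ D_𝔮 (with the tensor product cones) are dimension groups. Then for every infinite supernatural number 𝔫, the ordered group G ⊗ D_𝔫 is a dimension group. -/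
open scoped TensorProduct

namespace DimGrp

/-- The element `1/q` of a subgroup `D` of `ℚ`. -/
def el (D : AddSubgroup ℚ) (q : ℕ) (h : ((q : ℚ)⁻¹) ∈ D) : D := ⟨(q : ℚ)⁻¹, h⟩

lemma natDvd_one (𝔪 : Supernatural) : Supernatural.natDvd 1 𝔪 := by
  intro p hp
  simp [Nat.factorization_one]

lemma natDvd_lcm {𝔪 : Supernatural} {a b : ℕ} (ha : 0 < a) (hb : 0 < b)
    (hA : Supernatural.natDvd a 𝔪) (hB : Supernatural.natDvd b 𝔪) :
    Supernatural.natDvd (Nat.lcm a b) 𝔪 := by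
  intro p hp
  rw [Nat.factorization_lcm ha.ne' hb.ne']
  have : (a.factorization ⊔ b.factorization) p = max (a.factorization p) (b.factorization p) := rfl
  rw [this]
  rcases max_choice (a.factorization p) (b.factorization p) with h | h <;> rw [h]
  · exact hA p hp
  · exact hB p hp

lemma mem_invD {𝔪 : Supernatural} {D : AddSubgroup ℚ} (hD : IsDGroup 𝔪 D) {q : ℕ}
    (hq : 0 < q) (hdvd : Supernatural.natDvd q 𝔪) : ((q : ℚ)⁻¹) ∈ D := by
  refine (hD _).mpr ?_
  intro p hp
  rw [Rat.inv_natCast_den_of_pos hq]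
  exact hdvd p hp

lemma den_natDvd {𝔪 : Supernatural} {D : AddSubgroup ℚ} (hD : IsDGroup 𝔪 D) (d : D) :
    Supernatural.natDvd (d : ℚ).den 𝔪 := (hD _).mp d.2

lemma el_eq_smul (D : AddSubgroup ℚ) {q L : ℕ} (hq : 0 < q) (hL : 0 < L) (hdvd : q ∣ L)
    (h1 : ((q : ℚ)⁻¹) ∈ D) (h2 : ((L : ℚ)⁻¹) ∈ D) :
    el D q h1 = ((L / q : ℕ) : ℤ) • el D L h2 := by
  apply Subtype.ext
  show (q : ℚ)⁻¹ = ((L / q : ℕ) : ℤ) • (L : ℚ)⁻¹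
  rw [zsmul_eq_mul]
  push_cast [Nat.cast_div hdvd (by exact_mod_cast hq.ne' : (q:ℚ) ≠ 0)]
  field_simp
  have hq' : (q:ℚ) ≠ 0 := by exact_mod_cast hq.ne'
  rw [← Int.natCast_div, Int.cast_natCast, Nat.cast_div hdvd hq']
  field_simp

variable {G : Type*} [AddCommGroup G]


lemma tf_tmul_one_eq_zero (htf : ∀ (g : G) (n : ℤ), n ≠ 0 → n • g = 0 → g = 0)
    (g : G) (h : (1 : ℚ) ⊗ₜ[ℤ] g = 0) : g = 0 := by
  let f : G →ₗ[ℤ] ℚ ⊗[ℤ] G := TensorProduct.mk ℤ ℚ G 1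
  have hbc : IsLocalizedModule (nonZeroDivisors ℤ) f :=
    (isLocalizedModule_iff_isBaseChange (nonZeroDivisors ℤ) ℚ f).mpr
      (TensorProduct.isBaseChange ℤ G ℚ)
  have h0 : f g = 0 := h
  obtain ⟨s, hs⟩ := (IsLocalizedModule.eq_zero_iff (nonZeroDivisors ℤ) f).mp h0
  exact htf g s (nonZeroDivisors.coe_ne_zero s) hs

lemma tf_tmul_one_eq_zero' (htf : ∀ (g : G) (n : ℤ), n ≠ 0 → n • g = 0 → g = 0)
    (g : G) (h : g ⊗ₜ[ℤ] (1 : ℚ) = 0) : g = 0 := by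
  apply tf_tmul_one_eq_zero htf
  have := congrArg (TensorProduct.comm ℤ G ℚ) h
  simpa using this

lemma tf_tmul_inv_inj (htf : ∀ (g : G) (n : ℤ), n ≠ 0 → n • g = 0 → g = 0)
    {q r : ℕ} (hq : 0 < q) (hr : 0 < r) (g h : G)
    (heq : g ⊗ₜ[ℤ] ((q : ℚ)⁻¹) = h ⊗ₜ[ℤ] ((r : ℚ)⁻¹)) : (r : ℤ) • g = (q : ℤ) • h := by
  have e1 : ((q * r : ℕ) : ℤ) • ((q : ℚ)⁻¹) = (r : ℤ) • (1 : ℚ) := by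
    rw [zsmul_eq_mul, zsmul_eq_mul]; push_cast; field_simp
  have e2 : ((q * r : ℕ) : ℤ) • ((r : ℚ)⁻¹) = (q : ℤ) • (1 : ℚ) := by
    rw [zsmul_eq_mul, zsmul_eq_mul]; push_cast; field_simp [mul_comm]
  have h1 : ((q * r : ℕ) : ℤ) • (g ⊗ₜ[ℤ] ((q : ℚ)⁻¹)) = ((r:ℤ) • g) ⊗ₜ[ℤ] (1:ℚ) := by
    rw [← TensorProduct.tmul_smul, e1, ← TensorProduct.smul_tmul]
  have h2 : ((q * r : ℕ) : ℤ) • (h ⊗ₜ[ℤ] ((r : ℚ)⁻¹)) = ((q:ℤ) • h) ⊗ₜ[ℤ] (1:ℚ) := by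
    rw [← TensorProduct.tmul_smul, e2, ← TensorProduct.smul_tmul]
  have h3 : ((r:ℤ) • g - (q:ℤ) • h) ⊗ₜ[ℤ] (1:ℚ) = 0 := by
    rw [TensorProduct.sub_tmul, ← h1, ← h2, heq, sub_self]
  exact sub_eq_zero.mp (tf_tmul_one_eq_zero' htf _ h3)


lemma tmul_el_shift {D : AddSubgroup ℚ} (g : G) {q L : ℕ} (hq : 0 < q) (hL : 0 < L)
    (hdvd : q ∣ L) (h1 : ((q : ℚ)⁻¹) ∈ D) (h2 : ((L : ℚ)⁻¹) ∈ D) :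
    g ⊗ₜ[ℤ] el D q h1 = (((L / q : ℕ) : ℤ) • g) ⊗ₜ[ℤ] el D L h2 := by
  rw [el_eq_smul D hq hL hdvd h1 h2, TensorProduct.tmul_smul, TensorProduct.smul_tmul']

/-- torsion-freeness from pointed + unperforated -/
lemma htfZ {P : AddSubmonoid G} (hPpointed : ConePointed P) (hPunperf : ConeUnperforated P) :
    ∀ (g : G) (n : ℤ), n ≠ 0 → n • g = 0 → g = 0 := by
  have key : ∀ (g : G) (n : ℕ), 0 < n → n • g = 0 → g = 0 := by
    intro g n hn h
    have h1 : g ∈ P := hPunperf n g hn (h ▸ P.zero_mem)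
    have h2 : -g ∈ P := by
      apply hPunperf n (-g) hn
      rw [smul_neg, h, neg_zero]
      exact P.zero_mem
    exact hPpointed g h1 h2
  intro g n hn h
  rcases lt_or_gt_of_ne hn with hlt | hgt
  · refine key g (-n).toNat (by omega) ?_
    rw [← natCast_zsmul, Int.toNat_of_nonneg (by omega), neg_smul, h, neg_zero]
  · refine key g n.toNat (by omega) ?_
    rw [← natCast_zsmul, Int.toNat_of_nonneg (by omega)]
    exact h

section D
variable {D : AddSubgroup ℚ}

/-- inclusion G ⊗ D → G ⊗ ℚ -/
noncomputable def iota (D : AddSubgroup ℚ) : (G ⊗[ℤ] D) →ₗ[ℤ] (G ⊗[ℤ] ℚ) :=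
  LinearMap.lTensor G (D.subtype.toIntLinearMap)

lemma iota_tmul (g : G) (d : D) : iota D (g ⊗ₜ[ℤ] d) = g ⊗ₜ[ℤ] (d : ℚ) := rfl

lemma tmul_el_inj (htf : ∀ (g : G) (n : ℤ), n ≠ 0 → n • g = 0 → g = 0)
    {q r : ℕ} (hq : 0 < q) (hr : 0 < r) {g h : G} {h1 : ((q : ℚ)⁻¹) ∈ D}
    {h2 : ((r : ℚ)⁻¹) ∈ D} (heq : g ⊗ₜ[ℤ] el D q h1 = h ⊗ₜ[ℤ] el D r h2) :
    (r : ℤ) • g = (q : ℤ) • h := by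
  have := congrArg (iota D) heq
  rw [iota_tmul, iota_tmul] at this
  exact tf_tmul_inv_inj htf hq hr g h this

lemma tmul_el_eq_zero (htf : ∀ (g : G) (n : ℤ), n ≠ 0 → n • g = 0 → g = 0)
    {q : ℕ} (hq : 0 < q) {g : G} {h1 : ((q : ℚ)⁻¹) ∈ D}
    (heq : g ⊗ₜ[ℤ] el D q h1 = 0) : g = 0 := by
  have := congrArg (iota D) heq
  rw [iota_tmul, map_zero] at this
  have h2 : g ⊗ₜ[ℤ] ((q:ℚ)⁻¹) = (0 : G) ⊗ₜ[ℤ] (((1:ℕ):ℚ)⁻¹) := by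
    rw [TensorProduct.zero_tmul]
    exact this
  have h3 := tf_tmul_inv_inj htf hq one_pos g 0 h2
  simpa using h3
end D

section ND
variable {𝔪 : Supernatural} {D : AddSubgroup ℚ}

lemma combine_tmul (hD : IsDGroup 𝔪 D) {q r : ℕ} (hq : 0 < q) (hr : 0 < r)
    (hdq : Supernatural.natDvd q 𝔪) (hdr : Supernatural.natDvd r 𝔪)
    (h1 : ((q : ℚ)⁻¹) ∈ D) (h2 : ((r : ℚ)⁻¹) ∈ D) (g h : G) :
    g ⊗ₜ[ℤ] el D q h1 + h ⊗ₜ[ℤ] el D r h2 =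
      (((Nat.lcm q r / q : ℕ) : ℤ) • g + ((Nat.lcm q r / r : ℕ) : ℤ) • h) ⊗ₜ[ℤ]
        el D (Nat.lcm q r) (mem_invD hD (Nat.lcm_pos hq hr) (natDvd_lcm hq hr hdq hdr)) := by
  rw [tmul_el_shift g hq (Nat.lcm_pos hq hr) (Nat.dvd_lcm_left q r) h1
      (mem_invD hD (Nat.lcm_pos hq hr) (natDvd_lcm hq hr hdq hdr)),
    tmul_el_shift h hr (Nat.lcm_pos hq hr) (Nat.dvd_lcm_right q r) h2
      (mem_invD hD (Nat.lcm_pos hq hr) (natDvd_lcm hq hr hdq hdr)),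
    ← TensorProduct.add_tmul]

lemma normal_form (hD : IsDGroup 𝔪 D) (x : G ⊗[ℤ] D) :
    ∃ (q : ℕ) (hq : 0 < q) (hdvd : Supernatural.natDvd q 𝔪) (g : G),
      x = g ⊗ₜ[ℤ] el D q (mem_invD hD hq hdvd) := by
  induction x using TensorProduct.induction_on with
  | zero =>
      exact ⟨1, one_pos, natDvd_one 𝔪, 0, by rw [TensorProduct.zero_tmul]⟩
  | tmul g d =>
      refine ⟨(d : ℚ).den, (d : ℚ).pos, den_natDvd hD d, (d : ℚ).num • g, ?_⟩
      have hd : d = (d : ℚ).num • el D (d : ℚ).den (mem_invD hD (d : ℚ).pos (den_natDvd hD d)) := by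
        apply Subtype.ext
        push_cast [el, zsmul_eq_mul]
        rw [← div_eq_mul_inv, Rat.num_div_den]
      conv_lhs => rw [hd]
      rw [TensorProduct.tmul_smul, TensorProduct.smul_tmul']
  | add x y hx hy =>
      obtain ⟨q, hq, hdq, g, rfl⟩ := hx
      obtain ⟨r, hr, hdr, h, rfl⟩ := hy
      exact ⟨Nat.lcm q r, Nat.lcm_pos hq hr, natDvd_lcm hq hr hdq hdr, _,
        combine_tmul hD hq hr hdq hdr _ _ g h⟩

lemma mem_cone_iff (hD : IsDGroup 𝔪 D) (P : AddSubmonoid G) (x : G ⊗[ℤ] D) :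
    x ∈ tensorCone P D ↔ ∃ (q : ℕ) (hq : 0 < q) (hdvd : Supernatural.natDvd q 𝔪) (g : G),
      g ∈ P ∧ x = g ⊗ₜ[ℤ] el D q (mem_invD hD hq hdvd) := by
  constructor
  · intro hx
    refine AddSubmonoid.closure_induction ?_ ?_ ?_ hx
    · rintro z ⟨g, hg, d, hd, rfl⟩
      refine ⟨(d : ℚ).den, (d : ℚ).pos, den_natDvd hD d, (d : ℚ).num • g, ?_, ?_⟩
      · have : (d : ℚ).num • g = (d : ℚ).num.toNat • g := by
          rw [← natCast_zsmul, Int.toNat_of_nonneg (Rat.num_nonneg.mpr hd)]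
        rw [this]
        exact AddSubmonoid.nsmul_mem P hg _
      · have hd' : d = (d : ℚ).num • el D (d : ℚ).den
            (mem_invD hD (d : ℚ).pos (den_natDvd hD d)) := by
          apply Subtype.ext
          push_cast [el, zsmul_eq_mul]
          rw [← div_eq_mul_inv, Rat.num_div_den]
        conv_lhs => rw [hd']
        rw [TensorProduct.tmul_smul, TensorProduct.smul_tmul']
    · exact ⟨1, one_pos, natDvd_one 𝔪, 0, P.zero_mem, by rw [TensorProduct.zero_tmul]⟩
    · rintro x y hx hy ⟨q, hq, hdq, g, hg, rfl⟩ ⟨r, hr, hdr, h, hh, rfl⟩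
      refine ⟨Nat.lcm q r, Nat.lcm_pos hq hr, natDvd_lcm hq hr hdq hdr, _, ?_,
        combine_tmul hD hq hr hdq hdr _ _ g h⟩
      apply AddSubmonoid.add_mem
      · have : ((Nat.lcm q r / q : ℕ) : ℤ) • g = (Nat.lcm q r / q : ℕ) • g := natCast_zsmul ..
        rw [this]; exact AddSubmonoid.nsmul_mem P hg _
      · have : ((Nat.lcm q r / r : ℕ) : ℤ) • h = (Nat.lcm q r / r : ℕ) • h := natCast_zsmul ..
        rw [this]; exact AddSubmonoid.nsmul_mem P hh _
  · rintro ⟨q, hq, hdvd, g, hg, rfl⟩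
    apply AddSubmonoid.subset_closure
    exact ⟨g, hg, el D q (mem_invD hD hq hdvd),
      inv_nonneg.mpr (Nat.cast_nonneg q), rfl⟩

end ND

/-- primes dividing a natural divisor of `𝔪` have nonzero exponent in `𝔪` -/
lemma natDvd_good {𝔪 : Supernatural} {a : ℕ} (ha : 0 < a) (hA : Supernatural.natDvd a 𝔪) :
    ∀ p : ℕ, p.Prime → p ∣ a → 𝔪 p ≠ 0 := by
  intro p hp hpa
  have h1 : 0 < a.factorization p := hp.factorization_pos_of_dvd ha.ne' hpa
  have h2 := hA p hp
  intro h0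
  rw [h0, nonpos_iff_eq_zero, Nat.cast_eq_zero] at h2
  omega

lemma good_mul {𝔪 : Supernatural} {a b : ℕ}
    (hA : ∀ p : ℕ, p.Prime → p ∣ a → 𝔪 p ≠ 0) (hB : ∀ p : ℕ, p.Prime → p ∣ b → 𝔪 p ≠ 0) :
    ∀ p : ℕ, p.Prime → p ∣ a * b → 𝔪 p ≠ 0 := by
  intro p hp hpd
  rcases hp.dvd_mul.mp hpd with h | h
  · exact hA p hp h
  · exact hB p hp h

lemma good_coprime {𝔭 𝔮 : Supernatural} (hpq : Supernatural.Coprime 𝔭 𝔮) {a b : ℕ}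
    (hA : ∀ p : ℕ, p.Prime → p ∣ a → 𝔭 p ≠ 0) (hB : ∀ p : ℕ, p.Prime → p ∣ b → 𝔮 p ≠ 0) :
    Nat.Coprime a b := by
  by_contra h
  set d := Nat.gcd a b with hd
  have hp : (Nat.gcd a b).minFac.Prime := Nat.minFac_prime h
  have hpa : (Nat.gcd a b).minFac ∣ a := (Nat.minFac_dvd _).trans (Nat.gcd_dvd_left a b)
  have hpb : (Nat.gcd a b).minFac ∣ b := (Nat.minFac_dvd _).trans (Nat.gcd_dvd_right a b)
  rcases hpq _ hp with h0 | h0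
  · exact hA _ hp hpa h0
  · exact hB _ hp hpb h0

/-- Chicken McNugget consequence -/
lemma exists_rep {s u m : ℕ} (hs : 0 < s) (hu : 0 < u) (hcop : Nat.Coprime s u)
    (hm : s * u < m) : ∃ a b : ℕ, m = a * s + b * u := by
  by_cases h1 : s = 1
  · exact ⟨m, 0, by simp [h1]⟩
  by_cases h2 : u = 1
  · exact ⟨0, m, by simp [h2]⟩
  replace h1 : 1 < s := by omega
  replace h2 : 1 < u := by omega
  have hf := frobeniusNumber_pair hcop h1 h2
  have hmem : m ∈ AddSubmonoid.closure ({s, u} : Set ℕ) := by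
    by_contra hmm
    have := hf.2 hmm
    omega
  obtain ⟨a, b, hab⟩ := (AddSubmonoid.mem_closure_pair s u m).mp hmem
  exact ⟨a, b, by simp only [smul_eq_mul] at hab; omega⟩

section PD
variable {𝔪 : Supernatural} {D : AddSubgroup ℚ} {P : AddSubmonoid G}

lemma unperfZ (hPunperf : ConeUnperforated P) {n : ℕ} (hn : 0 < n) {g : G}
    (h : (n : ℤ) • g ∈ P) : g ∈ P := by
  rw [natCast_zsmul] at h
  exact hPunperf n g hn h

lemma nsmulZ_mem (hg : g ∈ P) (n : ℕ) : (n : ℤ) • g ∈ P := by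
  rw [natCast_zsmul]; exact AddSubmonoid.nsmul_mem P hg n

lemma elem_of_tmul_mem_cone (hD : IsDGroup 𝔪 D)
    (htf : ∀ (g : G) (n : ℤ), n ≠ 0 → n • g = 0 → g = 0)
    (hPunperf : ConeUnperforated P) {s : ℕ} (hs : 0 < s) {mems : ((s : ℚ)⁻¹) ∈ D} {v : G}
    (h : v ⊗ₜ[ℤ] el D s mems ∈ tensorCone P D) : v ∈ P := by
  obtain ⟨t, ht, hdt, p', hp', heq⟩ := (mem_cone_iff hD P _).mp h
  have h2 := tmul_el_inj htf hs ht heq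
  have h3 : (t : ℤ) • v ∈ P := by rw [h2]; exact nsmulZ_mem hp' s
  exact unperfZ hPunperf ht h3

lemma interp (hD : IsDGroup 𝔪 D)
    (htf : ∀ (g : G) (n : ℤ), n ≠ 0 → n • g = 0 → g = 0)
    (hPunperf : ConeUnperforated P)
    (hrip : ConeRIP (tensorCone P D)) (x₀ x₁ y₀ y₁ : G)
    (h00 : y₀ - x₀ ∈ P) (h10 : y₁ - x₀ ∈ P) (h01 : y₀ - x₁ ∈ P) (h11 : y₁ - x₁ ∈ P) :
    ∃ (s : ℕ) (z : G), 0 < s ∧ Supernatural.natDvd s 𝔪 ∧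
      z - (s : ℤ) • x₀ ∈ P ∧ z - (s : ℤ) • x₁ ∈ P ∧
      (s : ℤ) • y₀ - z ∈ P ∧ (s : ℤ) • y₁ - z ∈ P := by
  set e1 : ((1 : ℕ) : ℚ)⁻¹ ∈ D := mem_invD hD one_pos (natDvd_one 𝔪) with he1
  have hmemE : ∀ v : G, v ∈ P → (v ⊗ₜ[ℤ] el D 1 e1) ∈ tensorCone P D := fun v hv =>
    (mem_cone_iff hD P _).mpr ⟨1, one_pos, natDvd_one 𝔪, v, hv, rfl⟩
  have hsub : ∀ v w : G, v ⊗ₜ[ℤ] el D 1 e1 - w ⊗ₜ[ℤ] el D 1 e1 = (v - w) ⊗ₜ[ℤ] el D 1 e1 :=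
    fun v w => (TensorProduct.sub_tmul v w _).symm
  obtain ⟨a, ha0, ha1, hb0, hb1⟩ := hrip (x₀ ⊗ₜ[ℤ] el D 1 e1) (x₁ ⊗ₜ[ℤ] el D 1 e1)
    (y₀ ⊗ₜ[ℤ] el D 1 e1) (y₁ ⊗ₜ[ℤ] el D 1 e1)
    (by rw [hsub]; exact hmemE _ h00) (by rw [hsub]; exact hmemE _ h10)
    (by rw [hsub]; exact hmemE _ h01) (by rw [hsub]; exact hmemE _ h11)
  obtain ⟨s, hs, hds, z, rfl⟩ := normal_form hD a
  have hshift : ∀ v : G, v ⊗ₜ[ℤ] el D 1 e1 = ((s : ℤ) • v) ⊗ₜ[ℤ] el D s (mem_invD hD hs hds) := by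
    intro v
    have := tmul_el_shift v one_pos hs (one_dvd s) e1 (mem_invD hD hs hds)
    simpa using this
  refine ⟨s, z, hs, hds, ?_, ?_, ?_, ?_⟩
  · apply elem_of_tmul_mem_cone hD htf hPunperf hs
    rw [TensorProduct.sub_tmul, ← hshift x₀]; exact ha0
  · apply elem_of_tmul_mem_cone hD htf hPunperf hs
    rw [TensorProduct.sub_tmul, ← hshift x₁]; exact ha1
  · apply elem_of_tmul_mem_cone hD htf hPunperf hs
    rw [TensorProduct.sub_tmul, ← hshift y₀]; exact hb0
  · apply elem_of_tmul_mem_cone hD htf hPunperf hs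
    rw [TensorProduct.sub_tmul, ← hshift y₁]; exact hb1

lemma gen_aux (hD : IsDGroup 𝔪 D)
    (htf : ∀ (g : G) (n : ℤ), n ≠ 0 → n • g = 0 → g = 0)
    (hgen : ConeGenerating (tensorCone P D)) (x : G) :
    ∃ k : ℕ, 0 < k ∧ (∀ p : ℕ, p.Prime → p ∣ k → 𝔪 p ≠ 0) ∧
      (k : ℤ) • x ∈ AddSubgroup.closure (P : Set G) := by
  set e1 : ((1 : ℕ) : ℚ)⁻¹ ∈ D := mem_invD hD one_pos (natDvd_one 𝔪) with he1
  obtain ⟨a, ha, b, hb, hab⟩ := hgen (x ⊗ₜ[ℤ] el D 1 e1)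
  obtain ⟨s, hs, hds, p₁, hp₁, rfl⟩ := (mem_cone_iff hD P _).mp ha
  obtain ⟨t, ht, hdt, p₂, hp₂, rfl⟩ := (mem_cone_iff hD P _).mp hb
  have heq : ((t : ℤ) • x + p₂) ⊗ₜ[ℤ] el D t (mem_invD hD ht hdt) =
      p₁ ⊗ₜ[ℤ] el D s (mem_invD hD hs hds) := by
    rw [TensorProduct.add_tmul]
    have hx1 : x ⊗ₜ[ℤ] el D 1 e1 = ((t : ℤ) • x) ⊗ₜ[ℤ] el D t (mem_invD hD ht hdt) := by
      have := tmul_el_shift x one_pos ht (one_dvd t) e1 (mem_invD hD ht hdt)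
      simpa using this
    rw [← hx1, hab]
    abel
  have h2 := tmul_el_inj htf ht hs heq
  refine ⟨s * t, Nat.mul_pos hs ht,
    good_mul (natDvd_good hs hds) (natDvd_good ht hdt), ?_⟩
  have h3 : ((s * t : ℕ) : ℤ) • x = (t : ℤ) • p₁ - (s : ℤ) • p₂ := by
    rw [smul_add] at h2
    push_cast [mul_smul]
    rw [eq_sub_iff_add_eq]
    exact h2
  rw [h3]
  exact AddSubgroup.sub_mem _ (AddSubgroup.zsmul_mem _ (AddSubgroup.subset_closure hp₁) _)
    (AddSubgroup.zsmul_mem _ (AddSubgroup.subset_closure hp₂) _)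

end PD

lemma gen_main {𝔭 𝔮 : Supernatural} {Dp Dq : AddSubgroup ℚ} {P : AddSubmonoid G}
    (hpq : Supernatural.Coprime 𝔭 𝔮) (hDp : IsDGroup 𝔭 Dp) (hDq : IsDGroup 𝔮 Dq)
    (htf : ∀ (g : G) (n : ℤ), n ≠ 0 → n • g = 0 → g = 0)
    (hgenp : ConeGenerating (tensorCone P Dp)) (hgenq : ConeGenerating (tensorCone P Dq))
    (x : G) : ∃ a ∈ P, ∃ b ∈ P, x = a - b := by
  obtain ⟨k, hk, hgoodk, hkx⟩ := gen_aux hDp htf hgenp x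
  obtain ⟨k', hk', hgoodk', hkx'⟩ := gen_aux hDq htf hgenq x
  have hco : Nat.Coprime k k' := good_coprime hpq hgoodk hgoodk'
  have hic : IsCoprime (k : ℤ) (k' : ℤ) := Nat.isCoprime_iff_coprime.mpr hco
  obtain ⟨A, B, hAB⟩ := hic
  have hx : x ∈ AddSubgroup.closure (P : Set G) := by
    have h1 : (A * (k : ℤ) + B * (k' : ℤ)) • x = x := by rw [hAB, one_smul]
    rw [← h1, add_smul, mul_smul, mul_smul]
    exact AddSubgroup.add_mem _ (AddSubgroup.zsmul_mem _ hkx A) (AddSubgroup.zsmul_mem _ hkx' B)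
  refine AddSubgroup.closure_induction ?_ ?_ ?_ ?_ hx
  · intro g hg; exact ⟨g, hg, 0, P.zero_mem, (sub_zero g).symm⟩
  · exact ⟨0, P.zero_mem, 0, P.zero_mem, by simp⟩
  · rintro y z hy hz ⟨a, ha, b, hb, rfl⟩ ⟨c, hc, d, hd, rfl⟩
    exact ⟨a + c, P.add_mem ha hc, b + d, P.add_mem hb hd, by abel⟩
  · rintro y hy ⟨a, ha, b, hb, rfl⟩
    exact ⟨b, hb, a, ha, by abel⟩

end DimGrp

open DimGrp

/-- let `𝔭`, `𝔮` be relatively prime supernatural numbers and `(G, G⁺)` an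
unperforated partially ordered abelian group such that `G ⊗ D_𝔭` and `G ⊗ D_𝔮` (with the
tensor cones) are dimension groups. Then for every infinite supernatural number `𝔫`, the
ordered group `G ⊗ D_𝔫` is a dimension group. -/
theorem tensor_dimensionGroup_of_rational_dimensionGroup
    (𝔭 𝔮 : Supernatural) (hpq : Supernatural.Coprime 𝔭 𝔮)
    (Dp Dq : AddSubgroup ℚ) (hDp : IsDGroup 𝔭 Dp) (hDq : IsDGroup 𝔮 Dq)
    (G : Type*) [AddCommGroup G] (P : AddSubmonoid G)
    (hPpointed : ConePointed P) (hPunperf : ConeUnperforated P)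
    (hp : IsDimensionGroupCone (tensorCone P Dp))
    (hq : IsDimensionGroupCone (tensorCone P Dq)) :
    ∀ (𝔫 : Supernatural), 𝔫.Infinite → ∀ (Dn : AddSubgroup ℚ), IsDGroup 𝔫 Dn →
      IsDimensionGroupCone (tensorCone P Dn) := by
  intro 𝔫 hninf Dn hDn
  have htf := htfZ hPpointed hPunperf
  refine ⟨?_, ?_, ?_, ?_⟩
  · -- Pointed
    intro x hx hnx
    obtain ⟨q0, hq0, hdq0, g, hg, hxg⟩ := (mem_cone_iff hDn P x).mp hx
    obtain ⟨r0, hr0, hdr0, h, hh, hxh⟩ := (mem_cone_iff hDn P (-x)).mp hnx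
    have hsum : g ⊗ₜ[ℤ] el Dn q0 (mem_invD hDn hq0 hdq0)
        + h ⊗ₜ[ℤ] el Dn r0 (mem_invD hDn hr0 hdr0) = 0 := by
      rw [← hxg, ← hxh]; abel
    rw [combine_tmul hDn hq0 hr0 hdq0 hdr0 _ _ g h] at hsum
    have h0 := tmul_el_eq_zero htf (Nat.lcm_pos hq0 hr0) hsum
    have hcq0 : 0 < Nat.lcm q0 r0 / q0 :=
      Nat.div_pos (Nat.le_of_dvd (Nat.lcm_pos hq0 hr0) (Nat.dvd_lcm_left q0 r0)) hq0
    have hgP : ((Nat.lcm q0 r0 / q0 : ℕ) : ℤ) • g ∈ P := nsmulZ_mem hg _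
    have hneg : -(((Nat.lcm q0 r0 / q0 : ℕ) : ℤ) • g) = ((Nat.lcm q0 r0 / r0 : ℕ) : ℤ) • h := by
      exact neg_eq_of_add_eq_zero_right h0
    have hz : ((Nat.lcm q0 r0 / q0 : ℕ) : ℤ) • g = 0 :=
      hPpointed _ hgP (by rw [hneg]; exact nsmulZ_mem hh _)
    have hg0 : g = 0 := htf g _ (Int.natCast_ne_zero.mpr hcq0.ne') hz
    rw [hxg, hg0, TensorProduct.zero_tmul]
  · -- Generating
    intro x
    obtain ⟨q0, hq0, hdq0, g, rfl⟩ := normal_form hDn x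
    obtain ⟨a, ha, b, hb, rfl⟩ := gen_main hpq hDp hDq htf hp.2.1 hq.2.1 g
    exact ⟨a ⊗ₜ[ℤ] el Dn q0 (mem_invD hDn hq0 hdq0),
      (mem_cone_iff hDn P _).mpr ⟨q0, hq0, hdq0, a, ha, rfl⟩,
      b ⊗ₜ[ℤ] el Dn q0 (mem_invD hDn hq0 hdq0),
      (mem_cone_iff hDn P _).mpr ⟨q0, hq0, hdq0, b, hb, rfl⟩,
      TensorProduct.sub_tmul a b _⟩
  · -- Unperforated
    intro n x hn hnx
    obtain ⟨q0, hq0, hdq0, g, rfl⟩ := normal_form hDn x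
    have hsm : n • (g ⊗ₜ[ℤ] el Dn q0 (mem_invD hDn hq0 hdq0)) =
        ((n : ℤ) • g) ⊗ₜ[ℤ] el Dn q0 (mem_invD hDn hq0 hdq0) := by
      rw [← natCast_zsmul, TensorProduct.smul_tmul']
    rw [hsm] at hnx
    obtain ⟨r0, hr0, hdr0, h, hh, heq⟩ := (mem_cone_iff hDn P _).mp hnx
    have h2 := tmul_el_inj htf hq0 hr0 heq
    have hqL : q0 ∣ Nat.lcm q0 r0 := Nat.dvd_lcm_left q0 r0
    have hrL : r0 ∣ Nat.lcm q0 r0 := Nat.dvd_lcm_right q0 r0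
    have hL0 : 0 < Nat.lcm q0 r0 := Nat.lcm_pos hq0 hr0
    have hcqq : Nat.lcm q0 r0 / q0 * q0 = Nat.lcm q0 r0 := Nat.div_mul_cancel hqL
    have hcrr : Nat.lcm q0 r0 / r0 * r0 = Nat.lcm q0 r0 := Nat.div_mul_cancel hrL
    have h2' : ((r0 : ℤ) * (n : ℤ)) • g = (q0 : ℤ) • h := by rw [mul_smul]; exact h2
    have keyeq : (n : ℤ) • (((Nat.lcm q0 r0 / q0 : ℕ) : ℤ) • g) =
        ((Nat.lcm q0 r0 / r0 : ℕ) : ℤ) • h := by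
      have hz : (r0 : ℤ) • ((n : ℤ) • (((Nat.lcm q0 r0 / q0 : ℕ) : ℤ) • g)
          - ((Nat.lcm q0 r0 / r0 : ℕ) : ℤ) • h) = 0 := by
        rw [smul_sub, sub_eq_zero, smul_smul, smul_smul, smul_smul]
        have e1 : ((r0 : ℤ) * (n : ℤ)) * ((Nat.lcm q0 r0 / q0 : ℕ) : ℤ) =
            ((Nat.lcm q0 r0 / q0 : ℕ) : ℤ) * ((r0 : ℤ) * (n : ℤ)) := by ring
        rw [e1, ← smul_smul, h2', smul_smul]
        congr 1
        have hnat : Nat.lcm q0 r0 / q0 * q0 = r0 * (Nat.lcm q0 r0 / r0) := by rw [hcqq, mul_comm r0, hcrr]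
        exact_mod_cast hnat
      have := htf _ _ (Int.natCast_ne_zero.mpr hr0.ne') hz
      exact sub_eq_zero.mp this
    have hcqP : ((Nat.lcm q0 r0 / q0 : ℕ) : ℤ) • g ∈ P := by
      apply unperfZ hPunperf hn
      rw [keyeq]
      exact nsmulZ_mem hh _
    rw [tmul_el_shift g hq0 hL0 hqL _ (mem_invD hDn hL0 (natDvd_lcm hq0 hr0 hdq0 hdr0))]
    exact (mem_cone_iff hDn P _).mpr
      ⟨Nat.lcm q0 r0, hL0, natDvd_lcm hq0 hr0 hdq0 hdr0, _, hcqP, rfl⟩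
  · -- RIP
    intro gg₀ gg₁ hh₀ hh₁ m00 m10 m01 m11
    obtain ⟨qa, hqa, hdqa, a0, rfl⟩ := normal_form hDn gg₀
    obtain ⟨qb, hqb, hdqb, a1, rfl⟩ := normal_form hDn gg₁
    obtain ⟨qc, hqc, hdqc, b0, rfl⟩ := normal_form hDn hh₀
    obtain ⟨qd, hqd, hdqd, b1, rfl⟩ := normal_form hDn hh₁
    set Q := Nat.lcm (Nat.lcm qa qb) (Nat.lcm qc qd) with hQdef
    have hQ0 : 0 < Q := Nat.lcm_pos (Nat.lcm_pos hqa hqb) (Nat.lcm_pos hqc hqd)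
    have hdQ : Supernatural.natDvd Q 𝔫 :=
      natDvd_lcm (Nat.lcm_pos hqa hqb) (Nat.lcm_pos hqc hqd)
        (natDvd_lcm hqa hqb hdqa hdqb) (natDvd_lcm hqc hqd hdqc hdqd)
    have hmemQ : ((Q : ℚ)⁻¹) ∈ Dn := mem_invD hDn hQ0 hdQ
    have hdva : qa ∣ Q := dvd_trans (Nat.dvd_lcm_left _ _) (Nat.dvd_lcm_left _ _)
    have hdvb : qb ∣ Q := dvd_trans (Nat.dvd_lcm_right _ _) (Nat.dvd_lcm_left _ _)
    have hdvc : qc ∣ Q := dvd_trans (Nat.dvd_lcm_left _ _) (Nat.dvd_lcm_right _ _)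
    have hdvd' : qd ∣ Q := dvd_trans (Nat.dvd_lcm_right _ _) (Nat.dvd_lcm_right _ _)
    set x0 : G := ((Q / qa : ℕ) : ℤ) • a0 with hx0
    set x1 : G := ((Q / qb : ℕ) : ℤ) • a1 with hx1
    set y0 : G := ((Q / qc : ℕ) : ℤ) • b0 with hy0
    set y1 : G := ((Q / qd : ℕ) : ℤ) • b1 with hy1
    have ea : a0 ⊗ₜ[ℤ] el Dn qa (mem_invD hDn hqa hdqa) = x0 ⊗ₜ[ℤ] el Dn Q hmemQ :=
      tmul_el_shift a0 hqa hQ0 hdva _ _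
    have eb : a1 ⊗ₜ[ℤ] el Dn qb (mem_invD hDn hqb hdqb) = x1 ⊗ₜ[ℤ] el Dn Q hmemQ :=
      tmul_el_shift a1 hqb hQ0 hdvb _ _
    have ec : b0 ⊗ₜ[ℤ] el Dn qc (mem_invD hDn hqc hdqc) = y0 ⊗ₜ[ℤ] el Dn Q hmemQ :=
      tmul_el_shift b0 hqc hQ0 hdvc _ _
    have ed : b1 ⊗ₜ[ℤ] el Dn qd (mem_invD hDn hqd hdqd) = y1 ⊗ₜ[ℤ] el Dn Q hmemQ :=
      tmul_el_shift b1 hqd hQ0 hdvd' _ _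
    have key : ∀ v w : G,
        w ⊗ₜ[ℤ] el Dn Q hmemQ - v ⊗ₜ[ℤ] el Dn Q hmemQ ∈ tensorCone P Dn → w - v ∈ P := by
      intro v w hvw
      rw [← TensorProduct.sub_tmul] at hvw
      exact elem_of_tmul_mem_cone hDn htf hPunperf hQ0 hvw
    have p00 : y0 - x0 ∈ P := key _ _ (by rw [← ea, ← ec]; exact m00)
    have p10 : y1 - x0 ∈ P := key _ _ (by rw [← ea, ← ed]; exact m10)
    have p01 : y0 - x1 ∈ P := key _ _ (by rw [← eb, ← ec]; exact m01)
    have p11 : y1 - x1 ∈ P := key _ _ (by rw [← eb, ← ed]; exact m11)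
    obtain ⟨s, z, hs, hds, hz0, hz1, hz2, hz3⟩ :=
      interp hDp htf hPunperf hp.2.2.2 x0 x1 y0 y1 p00 p10 p01 p11
    obtain ⟨u, w, hu, hdu, hw0, hw1, hw2, hw3⟩ :=
      interp hDq htf hPunperf hq.2.2.2 x0 x1 y0 y1 p00 p10 p01 p11
    have hcop : Nat.Coprime s u := good_coprime hpq (natDvd_good hs hds) (natDvd_good hu hdu)
    obtain ⟨n0, hn0, hdn0, hn0big⟩ := hninf (Q * (s * u))
    set L := Nat.lcm n0 Q with hLdef
    have hL0 : 0 < L := Nat.lcm_pos hn0 hQ0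
    have hdL : Supernatural.natDvd L 𝔫 := natDvd_lcm hn0 hQ0 hdn0 hdQ
    have hQL : Q ∣ L := Nat.dvd_lcm_right _ _
    set m := L / Q with hmdef
    have hmQ : m * Q = L := Nat.div_mul_cancel hQL
    have hmgt : s * u < m := by
      have h1 : n0 ≤ L := Nat.le_of_dvd hL0 (Nat.dvd_lcm_left _ _)
      have e : s * u * Q = Q * (s * u) := Nat.mul_comm _ _
      have h2 : s * u * Q < m * Q := by omega
      exact Nat.lt_of_mul_lt_mul_right h2
    obtain ⟨α, β, hm_eq⟩ := exists_rep hs hu hcop hmgt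
    set c : G := (α : ℤ) • z + (β : ℤ) • w with hcdef
    have hshiftQ : ∀ v : G, v ⊗ₜ[ℤ] el Dn Q hmemQ =
        ((m : ℤ) • v) ⊗ₜ[ℤ] el Dn L (mem_invD hDn hL0 hdL) := fun v =>
      tmul_el_shift v hQ0 hL0 hQL _ _
    have memlow : ∀ v : G, z - (s : ℤ) • v ∈ P → w - (u : ℤ) • v ∈ P →
        c - (m : ℤ) • v ∈ P := by
      intro v h1 h2
      have hrw : c - (m : ℤ) • v = (α : ℤ) • (z - (s : ℤ) • v) + (β : ℤ) • (w - (u : ℤ) • v) := by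
        rw [hcdef, hm_eq]
        push_cast
        module
      rw [hrw]
      exact P.add_mem (nsmulZ_mem h1 α) (nsmulZ_mem h2 β)
    have memhigh : ∀ v : G, (s : ℤ) • v - z ∈ P → (u : ℤ) • v - w ∈ P →
        (m : ℤ) • v - c ∈ P := by
      intro v h1 h2
      have hrw : (m : ℤ) • v - c =
          (α : ℤ) • ((s : ℤ) • v - z) + (β : ℤ) • ((u : ℤ) • v - w) := by
        rw [hcdef, hm_eq]
        push_cast
        module
      rw [hrw]
      exact P.add_mem (nsmulZ_mem h1 α) (nsmulZ_mem h2 β)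
    refine ⟨c ⊗ₜ[ℤ] el Dn L (mem_invD hDn hL0 hdL), ?_, ?_, ?_, ?_⟩
    · rw [ea, hshiftQ, ← TensorProduct.sub_tmul]
      exact (mem_cone_iff hDn P _).mpr ⟨L, hL0, hdL, _, memlow x0 hz0 hw0, rfl⟩
    · rw [eb, hshiftQ, ← TensorProduct.sub_tmul]
      exact (mem_cone_iff hDn P _).mpr ⟨L, hL0, hdL, _, memlow x1 hz1 hw1, rfl⟩
    · rw [ec, hshiftQ, ← TensorProduct.sub_tmul]
      exact (mem_cone_iff hDn P _).mpr ⟨L, hL0, hdL, _, memhigh y0 hz2 hw2, rfl⟩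
    · rw [ed, hshiftQ, ← TensorProduct.sub_tmul]
      exact (mem_cone_iff hDn P _).mpr ⟨L, hL0, hdL, _, memhigh y1 hz3 hw3, rfl⟩
end

section
/- For each natural number n ≥ 2, let S_n = {0} ∪ {n, n+1, n+2, …} ⊆ ℤ. Then (ℤ, S_n) is an ordered abelian group that is not unperforated, but for every infinite supernatural number 𝔫 the ordered group (ℤ ⊗ D_𝔫, (S_n ⊗ D_𝔫⁺)-cone) is isomorphic, as an ordered abelian group, to (D_𝔫, D_𝔫⁺). -/
open scoped TensorProduct

/-- The cone `S_n = {0} ∪ {n, n+1, n+2, …}` in `ℤ`. -/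
def Scone (n : ℕ) : AddSubmonoid ℤ where
  carrier := {x : ℤ | x = 0 ∨ (n : ℤ) ≤ x}
  zero_mem' := Or.inl rfl
  add_mem' := by
    rintro a b (rfl | ha) (rfl | hb)
    · exact Or.inl (by simp)
    · exact Or.inr (by simpa using hb)
    · exact Or.inr (by simpa using ha)
    · exact Or.inr (by omega)


lemma mem_Scone {n : ℕ} {x : ℤ} : x ∈ Scone n ↔ x = 0 ∨ (n : ℤ) ≤ x := Iff.rfl

lemma natDvd_of_dvd_s7 {c m : ℕ} (hm : m ≠ 0) (h : c ∣ m) (𝔫 : Supernatural)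
    (hmd : Supernatural.natDvd m 𝔫) : Supernatural.natDvd c 𝔫 := by
  intro p hp
  have hc : c ≠ 0 := fun hc => hm (by simpa [hc] using h)
  have := (Nat.factorization_le_iff_dvd hc hm).2 h
  exact le_trans (by exact_mod_cast this p) (hmd p hp)

lemma exists_big_divisor (𝔫 : Supernatural) (h𝔫 : 𝔫.Infinite) (b : ℕ) (hb : 0 < b)
    (hbd : Supernatural.natDvd b 𝔫) (N : ℕ) :
    ∃ q : ℕ, N < q ∧ Supernatural.natDvd (b * q) 𝔫 := by
  obtain ⟨q₀, hq₀pos, hq₀dvd, hq₀⟩ := h𝔫 (N * b)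
  have hg : Nat.gcd q₀ b ∣ q₀ := Nat.gcd_dvd_left _ _
  have hgpos : 0 < Nat.gcd q₀ b := Nat.gcd_pos_of_pos_left _ hq₀pos
  refine ⟨q₀ / Nat.gcd q₀ b, ?_, ?_⟩
  · have h2 : Nat.gcd q₀ b ≤ b := Nat.le_of_dvd hb (Nat.gcd_dvd_right _ _)
    rw [Nat.lt_div_iff_mul_lt' hg]
    calc Nat.gcd q₀ b * N ≤ b * N := Nat.mul_le_mul_right _ h2
    _ = N * b := Nat.mul_comm _ _
    _ < q₀ := hq₀
  · intro p hp
    have hqpos : 0 < q₀ / Nat.gcd q₀ b := Nat.div_pos (Nat.le_of_dvd hq₀pos hg) hgpos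
    have e1 : (b * (q₀ / Nat.gcd q₀ b)).factorization p
        = b.factorization p + (q₀.factorization p - min (q₀.factorization p) (b.factorization p)) := by
      rw [Nat.factorization_mul hb.ne' hqpos.ne', Nat.factorization_div hg,
        Nat.factorization_gcd hq₀pos.ne' hb.ne']
      simp [Finsupp.inf_apply]
    have e2 : (b * (q₀ / Nat.gcd q₀ b)).factorization p
        = max (q₀.factorization p) (b.factorization p) := by omega
    rw [e2]
    have h1 := hq₀dvd p hp
    have h2 := hbd p hp
    rcases max_cases (q₀.factorization p) (b.factorization p) with ⟨h, _⟩ | ⟨h, _⟩ <;> rw [h]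
    · exact h1
    · exact h2

/-- The nonnegative cone of `D`. -/
def nonnegSub (D : AddSubgroup ℚ) : AddSubmonoid D where
  carrier := {d | 0 ≤ (d : ℚ)}
  zero_mem' := le_refl (0 : ℚ)
  add_mem' := fun {a b} ha hb => show (0 : ℚ) ≤ ((a + b : D) : ℚ) from add_nonneg ha hb

/-- for `n ≥ 2`, `(ℤ, S_n)` is an ordered abelian group which is not unperforated,
yet for every infinite supernatural number `𝔫` the ordered group `(ℤ ⊗ D_𝔫, S_n ⊗ D_𝔫⁺)` is
isomorphic, as an ordered abelian group, to `(D_𝔫, D_𝔫⁺)`. -/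
theorem Scone_ordered_not_unperforated_tensor_iso
    (n : ℕ) (hn : 2 ≤ n) :
    (ConePointed (Scone n) ∧ ConeGenerating (Scone n)) ∧
    ¬ ConeUnperforated (Scone n) ∧
    ∀ (𝔫 : Supernatural), 𝔫.Infinite → ∀ (D : AddSubgroup ℚ), IsDGroup 𝔫 D →
      ∃ e : (ℤ ⊗[ℤ] D) ≃+ D,
        (⇑e '' (tensorCone (Scone n) D : Set (ℤ ⊗[ℤ] D))) = {d : D | 0 ≤ (d : ℚ)} := by

  have hn2 : (2 : ℤ) ≤ (n : ℤ) := by exact_mod_cast hn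
  refine ⟨⟨?_, ?_⟩, ?_, ?_⟩
  · -- pointed
    intro x hx hnx
    rcases mem_Scone.1 hx with h | h
    · exact h
    · rcases mem_Scone.1 hnx with h' | h' <;> omega
  · -- generating
    intro x
    refine ⟨x + ((n : ℤ) + x.natAbs), mem_Scone.2 (Or.inr ?_), (n : ℤ) + x.natAbs,
      mem_Scone.2 (Or.inr ?_), by ring⟩ <;> omega
  · -- not unperforated
    intro h
    have h1 : ((n : ℕ) • (1 : ℤ)) ∈ Scone n := mem_Scone.2 (Or.inr (by simp))
    have := h n 1 (by omega) h1
    rcases mem_Scone.1 this with h' | h' <;> omega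
  · intro 𝔫 h𝔫 D hD
    refine ⟨(TensorProduct.lid ℤ D).toAddEquiv, ?_⟩
    have hmap : (⇑(TensorProduct.lid ℤ D).toAddEquiv '' (tensorCone (Scone n) D : Set (ℤ ⊗[ℤ] D)))
        = ((tensorCone (Scone n) D).map (TensorProduct.lid ℤ D).toAddEquiv.toAddMonoidHom : Set D) := by
      rw [AddSubmonoid.coe_map]; rfl
    rw [hmap]
    have hcone : (tensorCone (Scone n) D).map (TensorProduct.lid ℤ D).toAddEquiv.toAddMonoidHom
        = nonnegSub D := by
      refine le_antisymm ?_ ?_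
      · rw [tensorCone, AddMonoidHom.map_mclosure]
        refine AddSubmonoid.closure_le.2 ?_
        rintro _ ⟨_, ⟨g, hg, d, hd, rfl⟩, rfl⟩
        have hg0 : (0 : ℤ) ≤ g := by rcases mem_Scone.1 hg with h | h <;> omega
        show (0 : ℚ) ≤ ((TensorProduct.lid ℤ D).toAddEquiv.toAddMonoidHom (g ⊗ₜ[ℤ] d) : ℚ)
        have : (TensorProduct.lid ℤ D).toAddEquiv.toAddMonoidHom (g ⊗ₜ[ℤ] d) = g • d :=
          TensorProduct.lid_tmul d g
        rw [this]
        have : ((g • d : D) : ℚ) = (g : ℚ) * (d : ℚ) := by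
          push_cast [zsmul_eq_mul]; ring
        rw [this]
        exact mul_nonneg (by exact_mod_cast hg0) hd
      · intro d hd
        have hd0 : (0 : ℚ) ≤ (d : ℚ) := hd
        -- denominator of d divides 𝔫
        have hbd : Supernatural.natDvd (d : ℚ).den 𝔫 := (hD (d : ℚ)).1 d.2
        obtain ⟨q, hq, hbq⟩ := exists_big_divisor 𝔫 h𝔫 (d : ℚ).den (d : ℚ).den_pos hbd n
        have hqpos : 0 < q := lt_of_le_of_lt (Nat.zero_le n) hq
        have hqQ : (0 : ℚ) < (q : ℚ) := by exact_mod_cast hqpos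
        -- r = d / q lies in D
        have hrden : ((d : ℚ) / q).den ∣ (d : ℚ).den * q := by
          have h1 : ((d : ℚ) / q).den ∣ (d : ℚ).den * ((q : ℚ)⁻¹).den := by
            rw [div_eq_mul_inv]; exact Rat.mul_den_dvd _ _
          have h2 : ((q : ℚ)⁻¹).den ∣ q := by
            have := Rat.den_dvd 1 (q : ℤ)
            rw [Rat.divInt_eq_div] at this
            have h3 : (((1 : ℤ) : ℚ) / ((q : ℤ) : ℚ)) = (q : ℚ)⁻¹ := by push_cast; rw [one_div]
            rw [h3] at this
            exact_mod_cast this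
          exact h1.trans (mul_dvd_mul_left _ h2)
        have hrD : ((d : ℚ) / q) ∈ D := by
          rw [hD]
          exact natDvd_of_dvd_s7 (by positivity) hrden 𝔫 hbq
        set d' : D := ⟨(d : ℚ) / q, hrD⟩ with hd'
        refine ⟨(q : ℤ) ⊗ₜ[ℤ] d', AddSubmonoid.subset_closure ⟨(q : ℤ), mem_Scone.2 (Or.inr (by exact_mod_cast hq.le)), d', div_nonneg hd0 hqQ.le, rfl⟩, ?_⟩
        have h5 : (TensorProduct.lid ℤ D).toAddEquiv.toAddMonoidHom ((q : ℤ) ⊗ₜ[ℤ] d') = (q : ℤ) • d' :=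
          TensorProduct.lid_tmul d' (q : ℤ)
        rw [h5]
        apply Subtype.ext
        show (((q : ℤ) • d' : D) : ℚ) = (d : ℚ)
        push_cast [zsmul_eq_mul]
        exact mul_div_cancel₀ _ hqQ.ne'
    rw [hcone]
    rfl
end

section
/- Let p, q be relatively prime integers ≥ 2, let H = ℚ² with coordinatewise order, and let G ⊆ H be the subgroup generated by a₁ = (1/p, 1/p − 1) and b₁ = (1/p, 1/p), with the order inherited from H. Then G ⊗ ℚ (with the tensor cone) has the Riesz interpolation property, but G ⊗ D_{q^∞} does not: with a₀ = (0,0), b₀ = (1,0) ∈ G, there is no element x of G ⊗ D_{q^∞} with a₀, a₁ ≤ x ≤ b₀, b₁. -/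
open scoped TensorProduct

/-- with `p, q` relatively prime integers `≥ 2`, `H = ℚ²` with the coordinatewise
order, `a₁ = (1/p, 1/p − 1)`, `b₁ = (1/p, 1/p)`, and `G ⊆ H` the subgroup generated by
`a₁, b₁`, the group `G ⊗ ℚ` (identified with `ℚ·a₁ + ℚ·b₁ ⊆ ℚ²`, with the order inherited
from `H`) has the Riesz interpolation property, but `G ⊗ D_{q^∞}` (identified with
`D_{q^∞}·a₁ + D_{q^∞}·b₁ ⊆ ℚ²`) does not: with `a₀ = (0,0)` and `b₀ = (1,0)`, which lie in
`G`, there is no `x ∈ G ⊗ D_{q^∞}` with `a₀, a₁ ≤ x ≤ b₀, b₁`. -/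
theorem rational_riesz_but_q_infinity_fails
    (p q : ℕ) (hp : 2 ≤ p) (hq : 2 ≤ q) (hpq : Nat.Coprime p q) :
    let a₁ : ℚ × ℚ := (1 / p, 1 / p - 1)
    let b₁ : ℚ × ℚ := (1 / p, 1 / p)
    let a₀ : ℚ × ℚ := (0, 0)
    let b₀ : ℚ × ℚ := (1, 0)
    let Dq : Set ℚ := {x : ℚ | ∃ a : ℤ, ∃ k : ℕ, x = (a : ℚ) / (q : ℚ) ^ k}
    let GQ : Set (ℚ × ℚ) := {x | ∃ s t : ℚ, x = s • a₁ + t • b₁}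
    let GDq : Set (ℚ × ℚ) := {x | ∃ s ∈ Dq, ∃ t ∈ Dq, x = s • a₁ + t • b₁}
    -- `a₀` and `b₀` lie in the subgroup `G` generated by `a₁` and `b₁`
    (a₀ ∈ AddSubgroup.closure {a₁, b₁} ∧ b₀ ∈ AddSubgroup.closure {a₁, b₁}) ∧
    -- `G ⊗ ℚ` has the Riesz interpolation property
    (∀ g₀ g₁ h₀ h₁, g₀ ∈ GQ → g₁ ∈ GQ → h₀ ∈ GQ → h₁ ∈ GQ →
      g₀ ≤ h₀ → g₀ ≤ h₁ → g₁ ≤ h₀ → g₁ ≤ h₁ →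
      ∃ a ∈ GQ, g₀ ≤ a ∧ g₁ ≤ a ∧ a ≤ h₀ ∧ a ≤ h₁) ∧
    -- but `G ⊗ D_{q^∞}` has no interpolant for `a₀, a₁ ≤ · ≤ b₀, b₁`
    ¬ ∃ x ∈ GDq, a₀ ≤ x ∧ a₁ ≤ x ∧ x ≤ b₀ ∧ x ≤ b₁ := by
  intro a₁ b₁ a₀ b₀ Dq GQ GDq
  have hp0 : (p : ℚ) ≠ 0 := by
    have : (2 : ℚ) ≤ p := by exact_mod_cast hp
    linarith
  have hq0 : (q : ℚ) ≠ 0 := by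
    have : (2 : ℚ) ≤ q := by exact_mod_cast hq
    linarith
  refine ⟨⟨?_, ?_⟩, ?_, ?_⟩
  · show ((0, 0) : ℚ × ℚ) ∈ _
    rw [Prod.mk_zero_zero]
    exact zero_mem _
  · have ha : a₁ ∈ AddSubgroup.closure {a₁, b₁} :=
      AddSubgroup.subset_closure (by simp)
    have hb : b₁ ∈ AddSubgroup.closure {a₁, b₁} :=
      AddSubgroup.subset_closure (by simp)
    have key : b₀ = a₁ + ((p : ℤ) - 1) • b₁ := by
      show ((1 : ℚ), (0 : ℚ)) = _
      simp only [a₁, b₁, Prod.smul_mk, Prod.mk_add_mk, Prod.mk.injEq,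
        zsmul_eq_mul]
      constructor <;> (push_cast; field_simp; try ring)
    rw [key]
    exact add_mem ha (zsmul_mem hb _)
  · rintro g₀ g₁ h₀ h₁ _ _ _ _ h00 h01 h10 h11
    rw [Prod.le_def] at h00 h01 h10 h11
    refine ⟨(max g₀.1 g₁.1, max g₀.2 g₁.2), ?_, ?_, ?_, ?_, ?_⟩
    · refine ⟨max g₀.1 g₁.1 - max g₀.2 g₁.2,
        p * max g₀.1 g₁.1 - (max g₀.1 g₁.1 - max g₀.2 g₁.2), ?_⟩
      simp only [a₁, b₁, Prod.smul_mk, Prod.mk_add_mk, Prod.mk.injEq,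
        smul_eq_mul]
      constructor <;> (field_simp; try ring)
    · exact ⟨le_max_left _ _, le_max_left _ _⟩
    · exact ⟨le_max_right _ _, le_max_right _ _⟩
    · exact ⟨max_le h00.1 h10.1, max_le h00.2 h10.2⟩
    · exact ⟨max_le h01.1 h11.1, max_le h01.2 h11.2⟩
  · rintro ⟨x, ⟨s, ⟨as, ks, hs⟩, t, ⟨at', kt, ht⟩, hx⟩, h0x, h1x, hxb0, hxb1⟩
    subst hx
    rw [Prod.le_def] at h0x h1x hxb0 hxb1
    simp only [a₁, b₁, a₀, b₀, Prod.smul_mk, Prod.mk_add_mk, smul_eq_mul] at h0x h1x hxb0 hxb1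
    obtain ⟨h0x1, h0x2⟩ := h0x
    obtain ⟨h1x1, h1x2⟩ := h1x
    obtain ⟨hb01, hb02⟩ := hxb0
    obtain ⟨hb11, hb12⟩ := hxb1
    -- deduce s = 1/p
    have hps : (0:ℚ) < p := lt_of_le_of_ne (by positivity) (Ne.symm hp0)
    have hs1 : s = 1 / p := by
      have e1 : s * (1 / p) + t * (1 / p) = 1 / p := le_antisymm hb11 h1x1
      have e2 : s * (1 / p - 1) + t * (1 / p) = 0 := le_antisymm hb02 h0x2
      have e3 : s + t = 1 := by field_simp at e1; linarith
      have e4 : s * (1 / p) + t * (1 / p) - s = 0 := by linarith [e2]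
      rw [e1] at e4
      linarith
    -- derive contradiction with coprimality
    rw [hs1] at hs
    have hqk : ((q : ℚ)) ^ ks ≠ 0 := pow_ne_zero _ hq0
    have key : ((q : ℤ) ^ ks : ℚ) = ((as * p : ℤ) : ℚ) := by
      push_cast
      field_simp at hs
      linarith [hs]
    have keyZ : (q : ℤ) ^ ks = as * p := by exact_mod_cast key
    have hdvd : (p : ℤ) ∣ (q : ℤ) ^ ks := ⟨as, by linarith [keyZ]⟩
    have hdvdN : p ∣ q ^ ks := by
      have : (p : ℤ) ∣ ((q ^ ks : ℕ) : ℤ) := by push_cast; exact hdvd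
      exact_mod_cast this
    have : p = 1 := (Nat.Coprime.pow_right ks hpq).eq_one_of_dvd hdvdN
    omega
end

section
/- Let A be an abelian group and 𝔭, 𝔮 relatively prime supernatural numbers. Assume the reverse lexicographic order on the ℤ-indexed direct sum ⊕_{n∈ℤ} D_𝔫 of copies of D_𝔫 (g < h iff g ≠ h and g_{n₀} < h_{n₀} where n₀ is the largest index at which they differ). Then for an unbounded-above closed set F ⊆ ℝ and sequences g, h ∈ ⊕_{n∈ℤ} D_𝔫, one has g < h in reverse lexicographic order if and only if there exists r > 0 such that Σ_n g_n e^{nx} < Σ_n h_n e^{nx} for all x ∈ F ∩ [r, ∞). -/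
open scoped TensorProduct

/-- The reverse lexicographic strict order on finitely supported `ℤ`-indexed sequences:
`g < h` iff `g ≠ h` and `g n₀ < h n₀` at the largest index `n₀` where they differ. -/
def RevLexLT (g h : ℤ →₀ ℚ) : Prop :=
  ∃ n₀ : ℤ, g n₀ < h n₀ ∧ ∀ m : ℤ, n₀ < m → g m = h m

/-- The exponential polynomial `x ↦ Σ_{n ∈ ℤ} g_n e^{n x}` associated to a finitely supported
sequence `g`. -/
noncomputable def expPoly (g : ℤ →₀ ℚ) (x : ℝ) : ℝ :=
  g.sum fun n a => (a : ℝ) * Real.exp (n * x)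


open Filter Topology in
lemma expPoly_eventually_pos (d : ℤ →₀ ℚ) (n₀ : ℤ) (hpos : 0 < d n₀)
    (htop : ∀ m : ℤ, n₀ < m → d m = 0) :
    ∃ R : ℝ, ∀ x : ℝ, R ≤ x → 0 < expPoly d x := by
  have hmem : n₀ ∈ d.support := Finsupp.mem_support_iff.2 hpos.ne'
  have key : Tendsto (fun x : ℝ => ∑ n ∈ d.support, (d n : ℝ) * Real.exp ((n - n₀) * x))
      atTop (nhds ((d n₀ : ℝ))) := by
    have hrw : ((d n₀ : ℝ)) = ∑ n ∈ d.support, (if n = n₀ then ((d n₀ : ℝ)) else 0) := by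
      rw [Finset.sum_ite_eq' d.support n₀ (fun _ => ((d n₀ : ℝ)))]
      simp [hmem]
    rw [hrw]
    refine tendsto_finset_sum _ fun n hn => ?_
    rcases eq_or_ne n n₀ with rfl | hne
    · simpa using (tendsto_const_nhds : Tendsto (fun _ : ℝ => (d n : ℝ)) atTop _)
    · have hlt : n < n₀ := by
        rcases lt_or_gt_of_ne hne with h1 | h1
        · exact h1
        · exact absurd (htop n h1) (Finsupp.mem_support_iff.1 hn)
      have hneg : ((n : ℝ) - n₀) < 0 := by
        have : (n : ℝ) < n₀ := by exact_mod_cast hlt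
        linarith
      have h0 : Tendsto (fun x : ℝ => Real.exp (((n : ℝ) - n₀) * x)) atTop (nhds 0) := by
        apply Real.tendsto_exp_atBot.comp
        exact Tendsto.const_mul_atTop_of_neg hneg tendsto_id
      simp only [if_neg hne]
      simpa using h0.const_mul ((d n : ℝ))
  have hev : ∀ᶠ x in atTop,
      0 < ∑ n ∈ d.support, (d n : ℝ) * Real.exp ((n - n₀) * x) := by
    have hc : (0 : ℝ) < (d n₀ : ℝ) := by exact_mod_cast hpos
    exact key.eventually (eventually_gt_nhds hc)
  obtain ⟨R, hR⟩ := eventually_atTop.1 hev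
  refine ⟨R, fun x hx => ?_⟩
  have hsum := hR x hx
  have hx2 : expPoly d x
      = Real.exp (n₀ * x) * ∑ n ∈ d.support, (d n : ℝ) * Real.exp ((n - n₀) * x) := by
    rw [expPoly, Finsupp.sum, Finset.mul_sum]
    refine Finset.sum_congr rfl fun n _ => ?_
    have hexp : ((n : ℝ)) * x = (n₀ : ℝ) * x + ((n : ℝ) - n₀) * x := by ring
    rw [hexp, Real.exp_add]
    ring
  rw [hx2]
  positivity

lemma expPoly_sub (g h : ℤ →₀ ℚ) (x : ℝ) :
    expPoly (h - g) x = expPoly h x - expPoly g x := by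
  unfold expPoly
  rw [Finsupp.sum_sub_index]
  intro n b₁ b₂
  push_cast
  ring

/-- for a closed set `F ⊆ ℝ` unbounded above and finitely supported sequences
`g, h` with entries in `D_𝔫`, one has `g < h` in the reverse lexicographic order if and only
if there exists `r > 0` such that `Σ_n g_n e^{nx} < Σ_n h_n e^{nx}` for all
`x ∈ F ∩ [r, ∞)`. -/
theorem revLex_iff_eventually_lt_on_unbounded
    (𝔭 𝔮 : Supernatural) (hpq : Supernatural.Coprime 𝔭 𝔮)
    (𝔫 : Supernatural)
    (F : Set ℝ) (hF : IsClosed F) (hFunbdd : ¬ BddAbove F)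
    (g h : ℤ →₀ ℚ) (hg : ∀ n : ℤ, 𝔫.memD (g n)) (hh : ∀ n : ℤ, 𝔫.memD (h n)) :
    RevLexLT g h ↔
      ∃ r : ℝ, 0 < r ∧ ∀ x ∈ F, r ≤ x → expPoly g x < expPoly h x := by
  constructor
  · rintro ⟨n₀, hlt, htop⟩
    have hd : (0:ℚ) < (h - g) n₀ := by
      simp only [Finsupp.coe_sub, Pi.sub_apply, sub_pos]; exact hlt
    have htop' : ∀ m, n₀ < m → (h - g) m = 0 := fun m hm => by
      simp [htop m hm]
    obtain ⟨R, hR⟩ := expPoly_eventually_pos (h - g) n₀ hd htop'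
    refine ⟨max R 1, lt_of_lt_of_le one_pos (le_max_right _ _), fun x _ hx => ?_⟩
    have := hR x (le_trans (le_max_left _ _) hx)
    rw [expPoly_sub] at this
    linarith
  · rintro ⟨r, hr, hlt⟩
    have hex : ∀ b : ℝ, ∃ x ∈ F, b < x := by
      intro b
      rcases not_bddAbove_iff.1 hFunbdd b with ⟨x, hxF, hx⟩
      exact ⟨x, hxF, hx⟩
    have hne : g ≠ h := by
      intro heq
      obtain ⟨x, hxF, hx⟩ := hex r
      exact lt_irrefl _ (heq ▸ hlt x hxF hx.le)
    set T : Finset ℤ := (g.support ∪ h.support).filter (fun n => g n ≠ h n) with hT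
    have hmemT : ∀ n : ℤ, g n ≠ h n → n ∈ T := by
      intro n hn
      refine Finset.mem_filter.2 ⟨?_, hn⟩
      simp only [Finset.mem_union, Finsupp.mem_support_iff]
      by_contra hc
      push_neg at hc
      exact hn (hc.1.trans hc.2.symm)
    have hTne : T.Nonempty := by
      obtain ⟨n, hn⟩ : ∃ n, g n ≠ h n := by
        by_contra hc; push_neg at hc; exact hne (Finsupp.ext hc)
      exact ⟨n, hmemT n hn⟩
    set n₀ := T.max' hTne with hn₀def
    have hn₀ : g n₀ ≠ h n₀ := (Finset.mem_filter.1 (T.max'_mem hTne)).2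
    have htop : ∀ m, n₀ < m → g m = h m := by
      intro m hm
      by_contra hc
      exact absurd (T.le_max' m (hmemT m hc)) (not_le.2 hm)
    rcases lt_or_gt_of_ne hn₀ with hlt' | hgt
    · exact ⟨n₀, hlt', htop⟩
    · exfalso
      have hd : (0:ℚ) < (g - h) n₀ := by
        simp only [Finsupp.coe_sub, Pi.sub_apply, sub_pos]; exact hgt
      obtain ⟨R, hR⟩ := expPoly_eventually_pos (g - h) n₀ hd
        (fun m hm => by simp [htop m hm])
      obtain ⟨x, hxF, hx⟩ := hex (max r R)
      have h1 := hlt x hxF (le_trans (le_max_left _ _) hx.le)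
      have h2 := hR x (le_trans (le_max_right _ _) hx.le)
      rw [expPoly_sub] at h2
      linarith
end
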